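/- arXiv:2507.17358 — 12 statements merged into one kernel-verified Lean document; each statement's English description precedes it below -/
import Mathlib

section
/- Let T = (T₁,…,T_n) be a commuting n-tuple of bounded linear operators on a Hilbert space H and h ∈ H. Define the operator L on the Fock space H²(ℂⁿ) by ⟨L z^α, z^β⟩ = ⟨T^α h, T^β h⟩_H for all multi-indices α, β. Then L is a positive Hilbert–Schmidt operator, with ‖L‖_{HS}² ≤ exp(2 Σ_i ‖T_i‖²)·‖h‖⁴. -/
/-!
The quadratic form of the moment matrix is `‖∑ α, conj (a α) • T^α h‖²`, a Gram form, hence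
nonnegative. For the Hilbert–Schmidt bound, Cauchy–Schwarz gives
`|⟨T^β h, T^α h⟩|² / (α! β!) ≤ g α * g β` with `g α = ‖T^α h‖² / α!`, and
`‖T^α h‖ ≤ ∏ᵢ ‖Tᵢ‖^{αᵢ} ‖h‖` bounds `∑ g` by the multivariate exponential series
`‖h‖² ∑_α ∏ᵢ (‖Tᵢ‖²)^{αᵢ} / αᵢ! = ‖h‖² exp (∑ᵢ ‖Tᵢ‖²)`.
-/

open scoped ComplexOrder BigOperators

/-- `T^α = T₁^{α₁} ⋯ T_n^{α_n}` for a tuple of operators. -/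
noncomputable def opPow {H : Type*} [NormedAddCommGroup H] [NormedSpace ℂ H]
    {n : ℕ} (T : Fin n → H →L[ℂ] H) (α : Fin n → ℕ) : H →L[ℂ] H :=
  (List.ofFn fun i => (T i) ^ (α i)).prod

open Finset
open scoped Nat

lemma ContinuousLinearMap.norm_list_prod_apply_le {𝕜 E : Type*} [NontriviallyNormedField 𝕜]
    [SeminormedAddCommGroup E] [NormedSpace 𝕜 E] (l : List (E →L[𝕜] E)) (x : E) :
    ‖l.prod x‖ ≤ (l.map (‖·‖)).prod * ‖x‖ := by
  induction l with
  | nil => simp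
  | cons A l ih =>
    calc ‖A (l.prod x)‖ ≤ ‖A‖ * ‖l.prod x‖ := A.le_opNorm _
      _ ≤ ‖A‖ * ((l.map (‖·‖)).prod * ‖x‖) := by gcongr
      _ = ((A :: l).map (‖·‖)).prod * ‖x‖ := by simp [mul_assoc]

lemma norm_opPow_apply_le {H : Type*} [NormedAddCommGroup H] [NormedSpace ℂ H] {n : ℕ}
    (T : Fin n → H →L[ℂ] H) (α : Fin n → ℕ) (h : H) :
    ‖opPow T α h‖ ≤ (∏ i, ‖T i‖ ^ α i) * ‖h‖ := by
  refine (ContinuousLinearMap.norm_list_prod_apply_le _ h).trans ?_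
  rw [List.map_ofFn, List.prod_ofFn]
  refine mul_le_mul_of_nonneg_right (prod_le_prod (fun _ _ => norm_nonneg _) fun i _ => ?_)
    (norm_nonneg h)
  simp only [Function.comp_apply]
  rcases Nat.eq_zero_or_pos (α i) with hα | hα
  · rw [hα, pow_zero]
    exact ContinuousLinearMap.norm_id_le
  · exact norm_pow_le' _ hα

lemma sum_sum_conj_mul_inner_nonneg {ι H : Type*} [NormedAddCommGroup H]
    [InnerProductSpace ℂ H] (s : Finset ι) (a : ι → ℂ) (v : ι → H) :
    0 ≤ ∑ α ∈ s, ∑ β ∈ s, (starRingEnd ℂ) (a α) * a β * (inner ℂ (v β) (v α) : ℂ) := by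
  set w : H := ∑ γ ∈ s, (starRingEnd ℂ) (a γ) • v γ
  have hw : ∑ α ∈ s, ∑ β ∈ s, (starRingEnd ℂ) (a α) * a β * (inner ℂ (v β) (v α) : ℂ)
      = inner ℂ w w := by
    simp only [w, inner_sum, sum_inner, inner_smul_left, inner_smul_right,
      starRingEnd_self_apply, mul_sum, mul_assoc]
  rw [hw, RCLike.nonneg_iff (K := ℂ)]
  exact ⟨inner_self_nonneg, inner_self_im w⟩

lemma hasSum_fin_pi_prod {κ : Type*} {n : ℕ} {f : Fin n → κ → ℝ} {s : Fin n → ℝ}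
    (hf : ∀ i, HasSum (f i) (s i)) (hf₀ : ∀ i k, 0 ≤ f i k) :
    HasSum (fun α : Fin n → κ => ∏ i, f i (α i)) (∏ i, s i) := by
  induction n with
  | zero => simp
  | succ n ih =>
    have htail : HasSum (fun β : Fin n → κ => ∏ i, f i.succ (β i)) (∏ i : Fin n, s i.succ) :=
      ih (fun i => hf i.succ) (fun i => hf₀ i.succ)
    have hhead := (hf 0).summable
    have hprod := hhead.mul_of_nonneg htail.summable (fun k => hf₀ 0 k)
      fun β => prod_nonneg fun i _ => hf₀ i.succ (β i)
    have hsplit := (hf 0).mul htail hprod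
    have hcons : (fun α => ∏ i, f i (α i)) ∘ Fin.consEquiv (fun _ => κ)
        = fun p => f 0 p.1 * ∏ i, f i.succ (p.2 i) := by
      funext p
      simp [Fin.prod_univ_succ]
    rw [← (Fin.consEquiv fun _ => κ).hasSum_iff, hcons, Fin.prod_univ_succ]
    exact hsplit

lemma hasSum_prod_pow_div_factorial {n : ℕ} (c : Fin n → ℝ) (hc : ∀ i, 0 ≤ c i) :
    HasSum (fun α : Fin n → ℕ => ∏ i, c i ^ α i / (α i)!) (Real.exp (∑ i, c i)) := by
  rw [Real.exp_sum]
  refine hasSum_fin_pi_prod (f := fun i k => c i ^ k / k !) (fun i => ?_)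
    fun i k => div_nonneg (pow_nonneg (hc i) k) k.factorial.cast_nonneg
  rw [Real.exp_eq_exp_ℝ]
  exact NormedSpace.expSeries_div_hasSum_exp (c i)

section Moments

variable {n : ℕ} {H : Type*} [NormedAddCommGroup H] [InnerProductSpace ℂ H]
  (T : Fin n → H →L[ℂ] H) (h : H)

lemma sq_norm_opPow_apply_div_factorial_le (α : Fin n → ℕ) :
    ‖opPow T α h‖ ^ 2 / (∏ i, (α i)! : ℕ)
      ≤ ‖h‖ ^ 2 * ∏ i, (‖T i‖ ^ 2) ^ α i / (α i)! := by
  calc ‖opPow T α h‖ ^ 2 / (∏ i, (α i)! : ℕ)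
      ≤ ((∏ i, ‖T i‖ ^ α i) * ‖h‖) ^ 2 / (∏ i, (α i)! : ℕ) := by
        gcongr
        exact norm_opPow_apply_le T α h
    _ = ‖h‖ ^ 2 * ∏ i, (‖T i‖ ^ 2) ^ α i / (α i)! := by
        rw [prod_div_distrib, Nat.cast_prod]
        simp_rw [← pow_mul, mul_comm 2, pow_mul, prod_pow]
        ring

lemma summable_and_tsum_sq_norm_opPow_apply_div_factorial_le :
    Summable (fun α : Fin n → ℕ => ‖opPow T α h‖ ^ 2 / (∏ i, (α i)! : ℕ)) ∧
      ∑' α : Fin n → ℕ, ‖opPow T α h‖ ^ 2 / (∏ i, (α i)! : ℕ)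
        ≤ ‖h‖ ^ 2 * Real.exp (∑ i, ‖T i‖ ^ 2) := by
  have hexp := (hasSum_prod_pow_div_factorial (fun i => ‖T i‖ ^ 2) fun i => sq_nonneg _).mul_left
    (‖h‖ ^ 2)
  have hsumm := hexp.summable.of_nonneg_of_le (fun α => by positivity)
    (sq_norm_opPow_apply_div_factorial_le T h)
  exact ⟨hsumm, (hsumm.tsum_le_tsum (sq_norm_opPow_apply_div_factorial_le T h)
    hexp.summable).trans_eq hexp.tsum_eq⟩

lemma sq_norm_inner_opPow_div_factorial_le (α β : Fin n → ℕ) :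
    ‖(inner ℂ (opPow T β h) (opPow T α h) : ℂ)‖ ^ 2 /
        ((∏ i, (α i)! : ℕ) * (∏ i, (β i)! : ℕ) : ℝ)
      ≤ ‖opPow T α h‖ ^ 2 / (∏ i, (α i)! : ℕ) * (‖opPow T β h‖ ^ 2 / (∏ i, (β i)! : ℕ)) := by
  have hrhs : ‖opPow T α h‖ ^ 2 / (∏ i, (α i)! : ℕ) * (‖opPow T β h‖ ^ 2 / (∏ i, (β i)! : ℕ))
      = (‖opPow T β h‖ * ‖opPow T α h‖) ^ 2 / ((∏ i, (α i)! : ℕ) * (∏ i, (β i)! : ℕ) : ℝ) := by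
    ring
  rw [hrhs]
  gcongr
  exact norm_inner_le_norm _ _

end Moments

theorem stmt2_general (n : ℕ) {H : Type*} [NormedAddCommGroup H] [InnerProductSpace ℂ H]
    (T : Fin n → H →L[ℂ] H) (h : H) :
    (∀ (a : (Fin n → ℕ) →₀ ℂ),
      0 ≤ ∑ α ∈ a.support, ∑ β ∈ a.support,
        (starRingEnd ℂ) (a α) * a β *
          (inner ℂ (opPow T β h) (opPow T α h) : ℂ)) ∧
    Summable (fun p : ((Fin n → ℕ) × (Fin n → ℕ)) =>
      ‖(inner ℂ (opPow T p.2 h) (opPow T p.1 h) : ℂ)‖ ^ 2 /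
        ((∏ i, Nat.factorial (p.1 i)) * (∏ i, Nat.factorial (p.2 i)) : ℝ)) ∧
    (∑' p : ((Fin n → ℕ) × (Fin n → ℕ)),
      ‖(inner ℂ (opPow T p.2 h) (opPow T p.1 h) : ℂ)‖ ^ 2 /
        ((∏ i, Nat.factorial (p.1 i)) * (∏ i, Nat.factorial (p.2 i)) : ℝ))
      ≤ Real.exp (2 * ∑ i, ‖T i‖ ^ 2) * ‖h‖ ^ 4 := by
  set g : (Fin n → ℕ) → ℝ := fun α => ‖opPow T α h‖ ^ 2 / (∏ i, (α i)! : ℕ)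
  obtain ⟨hg, hg_le⟩ := summable_and_tsum_sq_norm_opPow_apply_div_factorial_le T h
  have hg₀ : 0 ≤ g := fun α => by positivity
  have hgg : Summable fun p : (Fin n → ℕ) × (Fin n → ℕ) => g p.1 * g p.2 :=
    hg.mul_of_nonneg hg hg₀ hg₀
  have hbound := fun p : (Fin n → ℕ) × (Fin n → ℕ) =>
    sq_norm_inner_opPow_div_factorial_le T h p.1 p.2
  have hsumm := hgg.of_nonneg_of_le (fun _ => by positivity) hbound
  refine ⟨fun a => sum_sum_conj_mul_inner_nonneg _ _ _, hsumm, ?_⟩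
  calc _ ≤ ∑' p : (Fin n → ℕ) × (Fin n → ℕ), g p.1 * g p.2 :=
        hsumm.tsum_le_tsum hbound hgg
    _ = (∑' α, g α) ^ 2 := by rw [sq, hg.tsum_mul_tsum hg hgg]
    _ ≤ (‖h‖ ^ 2 * Real.exp (∑ i, ‖T i‖ ^ 2)) ^ 2 := by gcongr
    _ = Real.exp (2 * ∑ i, ‖T i‖ ^ 2) * ‖h‖ ^ 4 := by
        rw [mul_pow, ← Real.exp_nat_mul]
        push_cast
        ring

/-- for a commuting tuple `T` of bounded operators on a Hilbert space `H`
and `h ∈ H`, the operator `L` on the Fock space `H²(ℂⁿ)` with matrix entries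
`⟨L e_α, e_β⟩ = ⟨T^α h, T^β h⟩/√(α! β!)` (w.r.t. the orthonormal basis `e_α = z^α/√α!`) is
positive and Hilbert–Schmidt, with `‖L‖_{HS}² ≤ exp(2 Σ_i ‖T_i‖²)·‖h‖⁴`.
Positivity of `L` is expressed as positive semidefiniteness of the moment matrix
`[⟨T^α h, T^β h⟩]` (quadratic form over finitely supported coefficient vectors), and the
Hilbert–Schmidt norm as the sum `Σ_{α,β} |⟨T^α h, T^β h⟩|²/(α! β!)`. -/
theorem stmt2 (n : ℕ) {H : Type*} [NormedAddCommGroup H] [InnerProductSpace ℂ H]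
    (T : Fin n → H →L[ℂ] H) (hcomm : ∀ i j, T i ∘L T j = T j ∘L T i) (h : H) :
    (∀ (a : (Fin n → ℕ) →₀ ℂ),
      0 ≤ ∑ α ∈ a.support, ∑ β ∈ a.support,
        (starRingEnd ℂ) (a α) * a β *
          (inner ℂ (opPow T β h) (opPow T α h) : ℂ)) ∧
    Summable (fun p : ((Fin n → ℕ) × (Fin n → ℕ)) =>
      ‖(inner ℂ (opPow T p.2 h) (opPow T p.1 h) : ℂ)‖ ^ 2 /
        ((∏ i, Nat.factorial (p.1 i)) * (∏ i, Nat.factorial (p.2 i)) : ℝ)) ∧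
    (∑' p : ((Fin n → ℕ) × (Fin n → ℕ)),
      ‖(inner ℂ (opPow T p.2 h) (opPow T p.1 h) : ℂ)‖ ^ 2 /
        ((∏ i, Nat.factorial (p.1 i)) * (∏ i, Nat.factorial (p.2 i)) : ℝ))
      ≤ Real.exp (2 * ∑ i, ‖T i‖ ^ 2) * ‖h‖ ^ 4 :=
  stmt2_general n T h
end

section
/- Let L be a positive compact operator on the Fock space H²(ℂⁿ) with spectral decomposition L = Σ_j f_j ⊗ f_j, where the f_j ∈ H²(ℂⁿ) are pairwise orthogonal eigenvectors with λ_j := ‖f_j‖²_{H²} > 0. Suppose L arises from a cyclic commuting tuple (T,h) on H via ⟨Lp,q⟩_{H²} = ⟨p(T)h, q(T)h⟩_H for all polynomials p,q. Then the vectors {λ_j^{-1} f_j(T)h} form an orthonormal basis of H. -/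
open scoped InnerProductSpace

namespace ContinuousLinearMap

variable {𝕜 E ι : Type*} [RCLike 𝕜] [NormedAddCommGroup E] [InnerProductSpace 𝕜 E]

theorem apply_mem_topologicalClosure_map_of_orthogonal {F : Type*} [NormedAddCommGroup F]
    [NormedSpace 𝕜 F] [CompleteSpace E] (T : E →L[𝕜] F)
    {K : Submodule 𝕜 E} (hK : ∀ z ∈ Kᗮ, T z = 0) (x : E) :
    T x ∈ (K.map (T : E →ₗ[𝕜] F)).topologicalClosure := by
  obtain ⟨y, hy, z, hz, rfl⟩ :=
    Submodule.exists_add_mem_mem_orthogonal (K := K.topologicalClosure) x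
  rw [Submodule.orthogonal_closure] at hz
  rw [map_add, hK z hz, add_zero, ← SetLike.mem_coe, Submodule.topologicalClosure_coe]
  exact map_mem_closure T.continuous hy fun u hu => ⟨u, hu, rfl⟩

variable {L : E →L[𝕜] E} {f : ι → E}

theorem apply_eq_norm_sq_smul_of_hasSum (horth : Pairwise fun j k => ⟪f j, f k⟫_𝕜 = 0)
    (hspec : ∀ x, HasSum (fun j => ⟪f j, x⟫_𝕜 • f j) (L x)) (j : ι) :
    L (f j) = ((‖f j‖ ^ 2 : ℝ) : 𝕜) • f j := by
  rw [(hspec (f j)).unique (hasSum_single j fun k hk => by rw [horth hk, zero_smul]),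
    inner_self_eq_norm_sq_to_K]
  norm_cast

theorem apply_eq_zero_of_hasSum (hspec : ∀ x, HasSum (fun j => ⟪f j, x⟫_𝕜 • f j) (L x)) {x : E}
    (hx : ∀ j, ⟪f j, x⟫_𝕜 = 0) : L x = 0 :=
  (hspec x).unique (by simp [hx, hasSum_zero])

variable {F : Type*} [NormedAddCommGroup F] [InnerProductSpace 𝕜 F] {A : E →L[𝕜] F}

theorem map_eq_zero_of_apply_eq_zero (hA : ∀ x y, ⟪L x, y⟫_𝕜 = ⟪A x, A y⟫_𝕜) {x : E}
    (hx : L x = 0) : A x = 0 :=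
  inner_self_eq_zero.mp (by rw [← hA, hx, inner_zero_left])

theorem orthonormal_inv_norm_sq_smul_map (hA : ∀ x y, ⟪L x, y⟫_𝕜 = ⟪A x, A y⟫_𝕜)
    (horth : Pairwise fun j k => ⟪f j, f k⟫_𝕜 = 0) (hf : ∀ j, f j ≠ 0)
    (hspec : ∀ x, HasSum (fun j => ⟪f j, x⟫_𝕜 • f j) (L x)) :
    Orthonormal 𝕜 fun j => (((‖f j‖ ^ 2)⁻¹ : ℝ) : 𝕜) • A (f j) := by
  classical
  rw [orthonormal_iff_ite]
  intro j k
  rw [inner_smul_left, inner_smul_right, ← hA, apply_eq_norm_sq_smul_of_hasSum horth hspec,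
    inner_smul_left]
  split_ifs with hjk
  · subst hjk
    have hnorm : (‖f j‖ : 𝕜) ≠ 0 := mod_cast norm_ne_zero_iff.mpr (hf j)
    rw [inner_self_eq_norm_sq_to_K]
    simp only [RCLike.conj_ofReal]
    push_cast
    field_simp
  · rw [horth hjk, mul_zero, mul_zero, mul_zero]

theorem topologicalClosure_span_range_map_eq_top [CompleteSpace E]
    (hA : ∀ x y, ⟪L x, y⟫_𝕜 = ⟪A x, A y⟫_𝕜)
    (hspec : ∀ x, HasSum (fun j => ⟪f j, x⟫_𝕜 • f j) (L x)) (hdense : DenseRange A) :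
    (Submodule.span 𝕜 (Set.range fun j => A (f j))).topologicalClosure = ⊤ := by
  have hker : ∀ x ∈ (Submodule.span 𝕜 (Set.range f))ᗮ, A x = 0 := fun x hx =>
    map_eq_zero_of_apply_eq_zero hA <| apply_eq_zero_of_hasSum hspec fun j =>
      Submodule.inner_right_of_mem_orthogonal (Submodule.subset_span (Set.mem_range_self j)) hx
  have hrange :
      Set.range A ⊆ (Submodule.span 𝕜 (Set.range fun j => A (f j))).topologicalClosure := by
    have hspan : Submodule.span 𝕜 (Set.range fun j => A (f j)) =
        (Submodule.span 𝕜 (Set.range f)).map (A : E →ₗ[𝕜] F) := by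
      rw [Submodule.map_span, ← Set.range_comp]
      rfl
    rintro _ ⟨x, rfl⟩
    rw [hspan]
    exact A.apply_mem_topologicalClosure_map_of_orthogonal hker x
  rw [eq_top_iff]
  intro v _
  exact closure_minimal hrange (Submodule.isClosed_topologicalClosure _) (hdense v)

end ContinuousLinearMap

theorem stmt3_general {H Fk : Type*}
    [NormedAddCommGroup H] [InnerProductSpace ℂ H]
    [NormedAddCommGroup Fk] [InnerProductSpace ℂ Fk] [CompleteSpace Fk]
    (ev : Fk →L[ℂ] H)
    (hdense : DenseRange ev)
    (L : Fk →L[ℂ] Fk)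
    (hL : ∀ x y : Fk, (inner ℂ (L x) y : ℂ) = inner ℂ (ev x) (ev y))
    {J : Type*} (f : J → Fk)
    (horth : ∀ j k, j ≠ k → (inner ℂ (f j) (f k) : ℂ) = 0)
    (hnz : ∀ j, f j ≠ 0)
    (hspec : ∀ x : Fk, HasSum (fun j => (inner ℂ (f j) x : ℂ) • f j) (L x)) :
    Orthonormal ℂ (fun j => ((‖f j‖ ^ 2)⁻¹ : ℝ) • ev (f j)) ∧
    (Submodule.span ℂ (Set.range fun j => ev (f j))).topologicalClosure = ⊤ := by
  refine ⟨?_, ContinuousLinearMap.topologicalClosure_span_range_map_eq_top hL hspec hdense⟩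
  simp_rw [RCLike.real_smul_eq_coe_smul (K := ℂ)]
  exact ContinuousLinearMap.orthonormal_inv_norm_sq_smul_map hL horth hnz hspec

/-- let `(T,h)` be a cyclic commuting tuple on `H`.  Model the Fock space
`H²(ℂⁿ)` as a Hilbert space `Fk` together with the continuous linear map `ev : Fk → H`
extending `p ↦ p(T)h` (so every `T^α h` is in its range, and its range is dense by
cyclicity), and let `L` be the positive compact operator with `⟨Lx,y⟩ = ⟨ev x, ev y⟩`,
with spectral decomposition `L = Σ_j f_j ⊗ f_j` (pairwise orthogonal eigenvectors `f_j`,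
`λ_j = ‖f_j‖² > 0`).  Then the vectors `λ_j⁻¹ · ev(f_j) = λ_j⁻¹ · f_j(T)h` form an
orthonormal basis of `H`. -/
theorem stmt3 {H Fk : Type*}
    [NormedAddCommGroup H] [InnerProductSpace ℂ H] [CompleteSpace H]
    [NormedAddCommGroup Fk] [InnerProductSpace ℂ Fk] [CompleteSpace Fk]
    {n : ℕ} (T : Fin n → H →L[ℂ] H) (hcomm : ∀ i j, T i ∘L T j = T j ∘L T i) (h : H)
    (hcyc : (Submodule.span ℂ
      (Set.range fun α : Fin n → ℕ => opPow T α h)).topologicalClosure = ⊤)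
    (ev : Fk →L[ℂ] H)
    (hev : ∀ α : Fin n → ℕ, opPow T α h ∈ Set.range ev)
    (hdense : DenseRange ev)
    (L : Fk →L[ℂ] Fk)
    (hL : ∀ x y : Fk, (inner ℂ (L x) y : ℂ) = inner ℂ (ev x) (ev y))
    {J : Type*} (f : J → Fk)
    (horth : ∀ j k, j ≠ k → (inner ℂ (f j) (f k) : ℂ) = 0)
    (hnz : ∀ j, f j ≠ 0)
    (hspec : ∀ x : Fk, HasSum (fun j => (inner ℂ (f j) x : ℂ) • f j) (L x)) :
    Orthonormal ℂ (fun j => ((‖f j‖ ^ 2)⁻¹ : ℝ) • ev (f j)) ∧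
    (Submodule.span ℂ (Set.range fun j => ev (f j))).topologicalClosure = ⊤ :=
  stmt3_general ev hdense L hL f horth hnz hspec
end

section
/- Let H be a reproducing kernel Hilbert space on a set X with kernel K, and let f : X → ℂ be a function. Then f ∈ H with ‖f‖ ≤ c if and only if the function c²K(x,y) − f(x)·conj(f(y)) is a positive semidefinite kernel on X. Moreover ‖f‖_H is the least such c. -/
/-!
Writing `v = ∑ aᵢ • k xᵢ`, the quadratic form of `c²K − f ⊗ f̄` on the coefficients `a` equals
`c²‖v‖² − |∑ aᵢ f̄(xᵢ)|²`. So positive semidefiniteness says exactly that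
`∑ aᵢ k xᵢ ↦ ∑ aᵢ f̄(xᵢ)` is a well-defined functional of norm `≤ c` on the span of the kernel
vectors. If `f = ⟪k ·, g⟫` this follows from Cauchy–Schwarz; conversely Hahn–Banach and the
Riesz representation theorem turn the functional into a vector `g` with `‖g‖ ≤ c` and
`⟪k x, g⟫ = f x`. Injectivity of `H → (X → ℂ)` makes `‖f‖` the least admissible `c`.
-/

open scoped ComplexOrder BigOperators

/-- A two-variable function on a set is a positive semidefinite kernel. -/
def IsPSDKernel {X : Type*} (G : X → X → ℂ) : Prop :=
  ∀ (m : ℕ) (x : Fin m → X) (a : Fin m → ℂ),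
    0 ≤ ∑ s, ∑ t, (starRingEnd ℂ) (a s) * a t * G (x s) (x t)

open scoped InnerProductSpace ComplexConjugate

theorem Finsupp.sum_eq_sum_fin {α R M : Type*} [Zero R] [AddCommMonoid M] (l : α →₀ R)
    (F : α → R → M) :
    l.sum F = ∑ i, F (l.support.equivFin.symm i) (l (l.support.equivFin.symm i)) :=
  (Finset.sum_coe_sort l.support _).symm.trans
    (Equiv.sum_comp _ fun p : l.support => F p (l p)).symm

theorem inner_sum_smul_sum_smul_self {𝕜 E ι : Type*} [RCLike 𝕜] [SeminormedAddCommGroup E]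
    [InnerProductSpace 𝕜 E] [Fintype ι] (a : ι → 𝕜) (v : ι → E) :
    ⟪∑ i, a i • v i, ∑ i, a i • v i⟫_𝕜 = ∑ s, ∑ t, conj (a s) * a t * ⟪v s, v t⟫_𝕜 := by
  simp only [sum_inner, inner_smul_left, inner_sum, inner_smul_right, Finset.mul_sum]
  rw [Finset.sum_comm]
  exact Finset.sum_congr rfl fun s _ => Finset.sum_congr rfl fun t _ => by ring

theorem sum_sum_conj_mul_mul_conj_eq {R ι : Type*} [CommRing R] [StarRing R] [Fintype ι]
    (a u : ι → R) :
    ∑ s, ∑ t, conj (a s) * a t * (u s * conj (u t))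
      = conj (∑ i, a i * conj (u i)) * ∑ i, a i * conj (u i) := by
  simp only [map_sum, map_mul, starRingEnd_self_apply, Finset.sum_mul_sum]
  exact Finset.sum_congr rfl fun s _ => Finset.sum_congr rfl fun t _ => by ring

section Extension

variable {𝕜 M F : Type*} [RCLike 𝕜] [AddCommGroup M] [Module 𝕜 M]

theorem LinearMap.exists_strongDual_comp_eq_of_norm_le [NormedAddCommGroup F] [NormedSpace 𝕜 F]
    (T : M →ₗ[𝕜] F) (φ : M →ₗ[𝕜] 𝕜) {c : ℝ} (hc : 0 ≤ c) (hφ : ∀ m, ‖φ m‖ ≤ c * ‖T m‖) :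
    ∃ Ψ : StrongDual 𝕜 F, ‖Ψ‖ ≤ c ∧ ∀ m, Ψ (T m) = φ m := by
  obtain ⟨S, hS⟩ := T.rangeRestrict.exists_rightInverse_of_surjective T.range_rangeRestrict
  have hTS : ∀ w, T (S w) = w := fun w => congr_arg Subtype.val (LinearMap.congr_fun hS w)
  have hφS : ∀ m, φ (S (T.rangeRestrict m)) = φ m := fun m => by
    have h := hφ (S (T.rangeRestrict m) - m)
    rw [map_sub, map_sub, hTS, LinearMap.codRestrict_apply, sub_self, norm_zero, mul_zero] at h
    exact sub_eq_zero.mp (norm_le_zero_iff.mp h)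
  have hbound : ∀ w, ‖(φ ∘ₗ S) w‖ ≤ c * ‖w‖ := fun w => by
    simpa [hTS] using hφ (S w)
  obtain ⟨Ψ, hΨ, hΨnorm⟩ := exists_extension_norm_eq _ ((φ ∘ₗ S).mkContinuous c hbound)
  refine ⟨Ψ, hΨnorm ▸ LinearMap.mkContinuous_norm_le _ hc hbound, fun m => ?_⟩
  simpa [hφS] using hΨ (T.rangeRestrict m)

theorem LinearMap.exists_inner_comp_eq_of_norm_le [NormedAddCommGroup F] [InnerProductSpace 𝕜 F]
    [CompleteSpace F] (T : M →ₗ[𝕜] F) (φ : M →ₗ[𝕜] 𝕜) {c : ℝ} (hc : 0 ≤ c)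
    (hφ : ∀ m, ‖φ m‖ ≤ c * ‖T m‖) :
    ∃ g : F, ‖g‖ ≤ c ∧ ∀ m, ⟪g, T m⟫_𝕜 = φ m := by
  obtain ⟨Ψ, hΨc, hΨ⟩ := T.exists_strongDual_comp_eq_of_norm_le φ hc hφ
  refine ⟨(InnerProductSpace.toDual 𝕜 F).symm Ψ, ?_, fun m => ?_⟩
  · rwa [LinearIsometryEquiv.norm_map]
  · rw [InnerProductSpace.toDual_symm_apply, hΨ]

end Extension

section Kernel

variable {X H : Type*} [NormedAddCommGroup H] [InnerProductSpace ℂ H] (k : X → H) (f : X → ℂ)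

theorem sum_sum_mul_kernel_sub_eq (c : ℝ) {ι : Type*} [Fintype ι] (x : ι → X) (a : ι → ℂ) :
    ∑ s, ∑ t, conj (a s) * a t * ((c : ℂ) ^ 2 * ⟪k (x s), k (x t)⟫_ℂ - f (x s) * conj (f (x t)))
      = (((c * ‖∑ i, a i • k (x i)‖) ^ 2 - ‖∑ i, a i * conj (f (x i))‖ ^ 2 : ℝ) : ℂ) := by
  calc _ = (c : ℂ) ^ 2 * ∑ s, ∑ t, conj (a s) * a t * ⟪k (x s), k (x t)⟫_ℂ
        - ∑ s, ∑ t, conj (a s) * a t * (f (x s) * conj (f (x t))) := by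
        simp only [Finset.mul_sum, ← Finset.sum_sub_distrib]
        exact Finset.sum_congr rfl fun s _ => Finset.sum_congr rfl fun t _ => by ring
    _ = _ := by
        rw [← inner_sum_smul_sum_smul_self, sum_sum_conj_mul_mul_conj_eq,
          inner_self_eq_norm_sq_to_K, Complex.conj_mul', RCLike.ofReal_eq_complex_ofReal]
        push_cast
        ring

theorem isPSDKernel_iff_norm_le {c : ℝ} (hc : 0 ≤ c) :
    IsPSDKernel (fun x y => (c : ℂ) ^ 2 * ⟪k x, k y⟫_ℂ - f x * conj (f y)) ↔
      ∀ (m : ℕ) (x : Fin m → X) (a : Fin m → ℂ),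
        ‖∑ i, a i * conj (f (x i))‖ ≤ c * ‖∑ i, a i • k (x i)‖ := by
  refine forall₃_congr fun m x a => ?_
  rw [sum_sum_mul_kernel_sub_eq, Complex.zero_le_real, sub_nonneg,
    pow_le_pow_iff_left₀ (norm_nonneg _) (by positivity) two_ne_zero]

theorem norm_sum_mul_conj_le {g : H} (hg : ∀ x, ⟪k x, g⟫_ℂ = f x) {c : ℝ} (hgc : ‖g‖ ≤ c)
    {ι : Type*} [Fintype ι] (x : ι → X) (a : ι → ℂ) :
    ‖∑ i, a i * conj (f (x i))‖ ≤ c * ‖∑ i, a i • k (x i)‖ := by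
  have h : ∑ i, a i * conj (f (x i)) = ⟪g, ∑ i, a i • k (x i)⟫_ℂ := by
    simp only [inner_sum, inner_smul_right, ← hg, inner_conj_symm]
  calc ‖∑ i, a i * conj (f (x i))‖ ≤ ‖g‖ * ‖∑ i, a i • k (x i)‖ := h ▸ norm_inner_le_norm _ _
    _ ≤ c * ‖∑ i, a i • k (x i)‖ := by gcongr

theorem exists_inner_eq_of_norm_le [CompleteSpace H] {c : ℝ} (hc : 0 ≤ c)
    (hf : ∀ (m : ℕ) (x : Fin m → X) (a : Fin m → ℂ),
      ‖∑ i, a i * conj (f (x i))‖ ≤ c * ‖∑ i, a i • k (x i)‖) :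
    ∃ g : H, ‖g‖ ≤ c ∧ ∀ x, ⟪k x, g⟫_ℂ = f x := by
  obtain ⟨g, hgc, hg⟩ := (Finsupp.linearCombination ℂ k).exists_inner_comp_eq_of_norm_le
    (Finsupp.linearCombination ℂ fun x => conj (f x)) hc fun l => by
      simp only [Finsupp.linearCombination_apply, Finsupp.sum_eq_sum_fin, smul_eq_mul]
      exact hf _ _ _
  refine ⟨g, hgc, fun x => ?_⟩
  simpa [Finsupp.linearCombination_single] using congr_arg conj (hg (Finsupp.single x 1))

theorem exists_inner_eq_and_norm_le_iff_isPSDKernel [CompleteSpace H] {c : ℝ} (hc : 0 ≤ c) :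
    (∃ g : H, (∀ x, ⟪k x, g⟫_ℂ = f x) ∧ ‖g‖ ≤ c) ↔
      IsPSDKernel (fun x y => (c : ℂ) ^ 2 * ⟪k x, k y⟫_ℂ - f x * conj (f y)) := by
  rw [isPSDKernel_iff_norm_le k f hc]
  refine ⟨fun ⟨g, hg, hgc⟩ _ => norm_sum_mul_conj_le k f hg hgc, fun hf => ?_⟩
  obtain ⟨g, hgc, hg⟩ := exists_inner_eq_of_norm_le k f hc hf
  exact ⟨g, hg, hgc⟩

end Kernel

/-- let `H` be a reproducing kernel Hilbert space on a set `X`, modeled by an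
injective linear map `E : H → (X → ℂ)` together with kernel vectors `k x ∈ H` satisfying
the reproducing property `(E g)(x) = ⟨g, K(·,x)⟩`, and kernel `K(x,y) = (E (k y)) x`.
Then a function `f : X → ℂ` belongs to `H` with norm `≤ c` iff
`c²K(x,y) − f(x)·conj(f(y))` is a positive semidefinite kernel on `X`; moreover the RKHS
norm of `f` is the least such `c`. -/
theorem stmt4 {X : Type*} {H : Type*}
    [NormedAddCommGroup H] [InnerProductSpace ℂ H] [CompleteSpace H]
    (E : H →ₗ[ℂ] (X → ℂ)) (hEinj : Function.Injective E)
    (k : X → H)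
    (hrepro : ∀ (g : H) (x : X), E g x = inner ℂ (k x) g)
    (K : X → X → ℂ) (hK : ∀ x y, K x y = E (k y) x)
    (f : X → ℂ) :
    (∀ c : ℝ, 0 ≤ c →
      ((∃ g : H, E g = f ∧ ‖g‖ ≤ c) ↔
        IsPSDKernel (fun x y => (c : ℂ) ^ 2 * K x y - f x * (starRingEnd ℂ) (f y)))) ∧
    (∀ g : H, E g = f →
      ‖g‖ = sInf {c : ℝ | 0 ≤ c ∧
        IsPSDKernel (fun x y => (c : ℂ) ^ 2 * K x y - f x * (starRingEnd ℂ) (f y))}) := by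
  have hK' : K = fun x y => ⟪k x, k y⟫_ℂ := by
    ext x y
    rw [hK, hrepro]
  have hE : ∀ g, E g = f ↔ ∀ x, ⟪k x, g⟫_ℂ = f x := fun g => by
    simp only [funext_iff, hrepro]
  have hiff : ∀ c : ℝ, 0 ≤ c → ((∃ g : H, E g = f ∧ ‖g‖ ≤ c) ↔
      IsPSDKernel (fun x y => (c : ℂ) ^ 2 * K x y - f x * (starRingEnd ℂ) (f y))) :=
    fun c hc => by
      simpa only [hE, hK'] using exists_inner_eq_and_norm_le_iff_isPSDKernel k f hc
  refine ⟨hiff, fun g hg => (IsLeast.csInf_eq ?_).symm⟩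
  refine ⟨⟨norm_nonneg g, (hiff _ (norm_nonneg g)).1 ⟨g, hg, le_rfl⟩⟩, ?_⟩
  rintro c ⟨hc, hpsd⟩
  obtain ⟨g', hg', hg'c⟩ := (hiff c hc).2 hpsd
  exact hEinj (hg'.trans hg.symm) ▸ hg'c
end

section
/- Let (T,h) be a cyclic commuting n-tuple on a Hilbert space H and define F(z,w) = ⟨e^{⟨T,w⟩}h, e^{⟨T,z⟩}h⟩_H where ⟨T,w⟩ = Σ_i \bar{w}_i T_i. Then for each i = 1,…,n the differentiation operator ∂_i : f ↦ ∂f/∂z_i maps the reproducing kernel Hilbert space H(F) into itself and is bounded with ‖∂_i‖ ≤ ‖T_i‖. -/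
/-!
Write `e_w := e^{⟨T,w⟩}h`. By definition of `F`, the Gram matrix of the kernel vectors `k_w` of
`H(F)` equals that of the vectors `e_w` of `H`, so `k_w ↦ e_w` extends to an isometry
`U : H(F) → H`. Since `e^{⟨T,z⟩}* = e^{Σ z_j T_j*}`, every `f ∈ H(F)` is the entire function
`f(z) = ⟨k_z, f⟩ = ⟨h, e^{Σ z_j T_j*} U f⟩`, and more generally `U* x` is the function
`z ↦ ⟨h, e^{Σ z_j T_j*} x⟩` for every `x ∈ H`. As the `T_j*` commute, `∂_i` multiplies the
exponential by `T_i*`, so `∂_i f = U* T_i* U f`, whose norm is at most `‖T_i‖ ‖f‖`.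
-/

open scoped BigOperators

/-- The kernel `F_{T,h}(z,w) = ⟨e^{⟨T,w⟩}h, e^{⟨T,z⟩}h⟩_H`, where
`⟨T,w⟩ = Σ_i conj(w_i)·T_i` (Mathlib's `inner` is conjugate-linear in the first slot). -/
noncomputable def kerF {H : Type*} [NormedAddCommGroup H] [InnerProductSpace ℂ H]
    {n : ℕ} (T : Fin n → H →L[ℂ] H) (h : H) (z w : Fin n → ℂ) : ℂ :=
  inner ℂ (NormedSpace.exp (∑ i, (starRingEnd ℂ) (z i) • T i) h)
        (NormedSpace.exp (∑ i, (starRingEnd ℂ) (w i) • T i) h)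

open NormedSpace Finsupp ContinuousLinearMap

theorem sum_add_smul_single_smul {R M ι : Type*} [Semiring R] [AddCommMonoid M] [Module R M]
    [Fintype ι] [DecidableEq ι] (S : ι → M) (z : ι → R) (i : ι) (t : R) :
    ∑ j, (z + t • Pi.single i (1 : R) : ι → R) j • S j = ∑ j, z j • S j + t • S i := by
  simp [add_smul, Finset.sum_add_distrib, Pi.single_apply, ite_smul]

section ExpOfLinearCombination

variable {𝕂 𝔸 ι : Type*} [RCLike 𝕂] [NormedRing 𝔸] [NormedAlgebra 𝕂 𝔸] [CompleteSpace 𝔸]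
  [Fintype ι]

theorem differentiable_exp_sum_smul (S : ι → 𝔸) :
    Differentiable 𝕂 fun z : ι → 𝕂 => exp (∑ j, z j • S j) := by
  let L : (ι → 𝕂) →L[𝕂] 𝔸 := ∑ j, (proj j).smulRight (S j)
  have hL : ∀ z, L z = ∑ j, z j • S j := fun z => by simp [L]
  simp_rw [← hL]
  exact fun z => (exp_analytic (L z)).differentiableAt.comp z L.differentiableAt

theorem fderiv_exp_sum_smul_single [DecidableEq ι] (S : ι → 𝔸)
    (hS : ∀ p q, Commute (S p) (S q)) (z : ι → 𝕂) (i : ι) :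
    fderiv 𝕂 (fun z : ι → 𝕂 => exp (∑ j, z j • S j)) z (Pi.single i 1)
      = exp (∑ j, z j • S j) * S i := by
  set A := ∑ j, z j • S j
  have hline : HasDerivAt (fun t : 𝕂 => z + t • Pi.single i 1) (Pi.single i 1) 0 := by
    simpa using ((hasDerivAt_id (0 : 𝕂)).smul_const (Pi.single i (1 : 𝕂))).const_add z
  have hchain := (differentiable_exp_sum_smul S z).hasFDerivAt.comp_hasDerivAt_of_eq 0 hline
    (by simp)
  have hcomm : Commute A (S i) := Commute.sum_left _ _ _ fun j _ => (hS j i).smul_left _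
  have hsplit (t : 𝕂) :
      exp (∑ j, (z + t • Pi.single i (1 : 𝕂) : ι → 𝕂) j • S j) = exp A * exp (t • S i) := by
    rw [sum_add_smul_single_smul, exp_add_of_commute_of_mem_ball (𝕂 := 𝕂) (hcomm.smul_right t)
      ((expSeries_radius_eq_top 𝕂 𝔸).symm ▸ edist_lt_top _ _)
      ((expSeries_radius_eq_top 𝕂 𝔸).symm ▸ edist_lt_top _ _)]
  have hprod : HasDerivAt (fun t : 𝕂 => exp A * exp (t • S i)) (exp A * S i) 0 := by
    simpa using (hasDerivAt_exp_smul_const (S i) (0 : 𝕂)).const_mul (exp A)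
  simp_rw [Function.comp_def, hsplit] at hchain
  exact hchain.unique hprod

end ExpOfLinearCombination

section InnerExp

variable {𝕜 H ι : Type*} [RCLike 𝕜] [NormedAddCommGroup H] [InnerProductSpace 𝕜 H]
  [CompleteSpace H] [Fintype ι]

theorem adjoint_exp_sum_conj_smul (T : ι → H →L[𝕜] H) (z : ι → 𝕜) :
    adjoint (exp (∑ j, starRingEnd 𝕜 (z j) • T j)) = exp (∑ j, z j • adjoint (T j)) := by
  simp only [← star_eq_adjoint, star_exp, star_sum, star_smul, starRingEnd_apply, star_star]

theorem inner_exp_sum_conj_smul (T : ι → H →L[𝕜] H) (z : ι → 𝕜) (x y : H) :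
    inner 𝕜 (exp (∑ j, starRingEnd 𝕜 (z j) • T j) x) y
      = inner 𝕜 x (exp (∑ j, z j • adjoint (T j)) y) := by
  rw [← adjoint_exp_sum_conj_smul, adjoint_inner_right]

theorem differentiable_inner_exp_sum_smul (S : ι → H →L[𝕜] H) (x y : H) :
    Differentiable 𝕜 fun z : ι → 𝕜 => inner 𝕜 x (exp (∑ j, z j • S j) y) :=
  ((innerSL 𝕜 x).comp (apply 𝕜 H y)).differentiable.comp (differentiable_exp_sum_smul S)

theorem fderiv_inner_exp_sum_smul_single [DecidableEq ι] (S : ι → H →L[𝕜] H)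
    (hS : ∀ p q, Commute (S p) (S q)) (x y : H) (z : ι → 𝕜) (i : ι) :
    fderiv 𝕜 (fun z : ι → 𝕜 => inner 𝕜 x (exp (∑ j, z j • S j) y)) z (Pi.single i 1)
      = inner 𝕜 x (exp (∑ j, z j • S j) (S i y)) := by
  let C : (H →L[𝕜] H) →L[𝕜] 𝕜 := (innerSL 𝕜 x).comp (apply 𝕜 H y)
  change fderiv 𝕜 (C ∘ fun z : ι → 𝕜 => exp (∑ j, z j • S j)) z (Pi.single i 1) = _
  rw [fderiv_comp z C.differentiableAt (differentiable_exp_sum_smul S z), C.fderiv, comp_apply,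
    fderiv_exp_sum_smul_single S hS]
  rfl

end InnerExp

section InnerPreservingExtension

variable {𝕜 ι E F : Type*} [RCLike 𝕜] [NormedAddCommGroup E] [InnerProductSpace 𝕜 E]
  [NormedAddCommGroup F] [InnerProductSpace 𝕜 F] {k : ι → E} {e : ι → F}

theorem inner_linearCombination_eq_of_inner_eq
    (he : ∀ a b, inner 𝕜 (e a) (e b) = inner 𝕜 (k a) (k b)) (c d : ι →₀ 𝕜) :
    inner 𝕜 (linearCombination 𝕜 e c) (linearCombination 𝕜 e d)
      = inner 𝕜 (linearCombination 𝕜 k c) (linearCombination 𝕜 k d) := by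
  simp [linearCombination_apply, Finsupp.sum_inner, Finsupp.inner_sum, inner_smul_left,
    inner_smul_right, he]

theorem norm_linearCombination_eq_of_inner_eq
    (he : ∀ a b, inner 𝕜 (e a) (e b) = inner 𝕜 (k a) (k b)) (c : ι →₀ 𝕜) :
    ‖linearCombination 𝕜 e c‖ = ‖linearCombination 𝕜 k c‖ := by
  rw [norm_eq_sqrt_re_inner (𝕜 := 𝕜), norm_eq_sqrt_re_inner (𝕜 := 𝕜),
    inner_linearCombination_eq_of_inner_eq he]

theorem exists_linearIsometry_of_inner_eq [CompleteSpace F]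
    (hk : (Submodule.span 𝕜 (Set.range k)).topologicalClosure = ⊤)
    (he : ∀ a b, inner 𝕜 (e a) (e b) = inner 𝕜 (k a) (k b)) :
    ∃ U : E →ₗᵢ[𝕜] F, ∀ a, U (k a) = e a := by
  have hdense : DenseRange (linearCombination 𝕜 k) := by
    rw [DenseRange, ← LinearMap.coe_range, range_linearCombination]
    exact Submodule.dense_iff_topologicalClosure_eq_top.mpr hk
  have hbound : ∀ c, ‖linearCombination 𝕜 e c‖ ≤ 1 * ‖linearCombination 𝕜 k c‖ := fun c => by
    rw [one_mul, norm_linearCombination_eq_of_inner_eq he]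
  let U := (linearCombination 𝕜 e).extendOfNorm (linearCombination 𝕜 k)
  have hU : ∀ c, U (linearCombination 𝕜 k c) = linearCombination 𝕜 e c :=
    LinearMap.extendOfNorm_eq hdense ⟨1, hbound⟩
  have hUnorm : ∀ x, ‖U x‖ = ‖x‖ := fun x =>
    hdense.induction_on x (isClosed_eq (by fun_prop) (by fun_prop)) fun c => by
      rw [hU, norm_linearCombination_eq_of_inner_eq he]
  exact ⟨⟨U.toLinearMap, hUnorm⟩, fun a => by simpa using hU (single a 1)⟩

end InnerPreservingExtension

theorem stmt6_general {H : Type*} [NormedAddCommGroup H] [InnerProductSpace ℂ H] [CompleteSpace H]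
    {n : ℕ} (T : Fin n → H →L[ℂ] H) (hcomm : ∀ i j, T i ∘L T j = T j ∘L T i) (h : H)
    {HF : Type*} [NormedAddCommGroup HF] [InnerProductSpace ℂ HF] [CompleteSpace HF]
    (E : HF →ₗ[ℂ] ((Fin n → ℂ) → ℂ))
    (k : (Fin n → ℂ) → HF)
    (hrepro : ∀ (f : HF) (w : Fin n → ℂ), E f w = inner ℂ (k w) f)
    (hker : ∀ z w : Fin n → ℂ, E (k w) z = kerF T h z w)
    (hspan : (Submodule.span ℂ (Set.range k)).topologicalClosure = ⊤)
    (i : Fin n) :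
    ∀ f : HF, Differentiable ℂ (E f) ∧
      ∃ g : HF, (∀ z, E g z = fderiv ℂ (E f) z (Pi.single i 1)) ∧
        ‖g‖ ≤ ‖T i‖ * ‖f‖ := by
  set S : Fin n → H →L[ℂ] H := fun j => adjoint (T j)
  have hS : ∀ p q, Commute (S p) (S q) := fun p q =>
    (show Commute (T p) (T q) from hcomm p q).star_star
  obtain ⟨U, hU⟩ := exists_linearIsometry_of_inner_eq
    (e := fun w => exp (∑ j, starRingEnd ℂ (w j) • T j) h) hspan
    fun a b => by rw [← hrepro, hker]; rfl
  set V := adjoint U.toContinuousLinearMap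
  have hEV : ∀ x z, E (V x) z = inner ℂ h (exp (∑ j, z j • S j) x) := fun x z => by
    rw [hrepro, adjoint_inner_right, LinearIsometry.coe_toContinuousLinearMap, hU,
      inner_exp_sum_conj_smul]
  have hVU : ∀ f, V (U f) = f := fun f =>
    congr($((isometry_iff_adjoint_comp_self _).mp U.isometry) f)
  intro f
  have hEf : E f = fun z => inner ℂ h (exp (∑ j, z j • S j) (U f)) :=
    funext fun z => by rw [← hEV, hVU]
  refine ⟨hEf ▸ differentiable_inner_exp_sum_smul S h (U f), V (S i (U f)), fun z => ?_, ?_⟩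
  · rw [hEf, fderiv_inner_exp_sum_smul_single S hS, hEV]
  · calc ‖V (S i (U f))‖ ≤ ‖S i (U f)‖ := by
          refine (V.le_opNorm _).trans (mul_le_of_le_one_left (norm_nonneg _) ?_)
          rw [adjoint.norm_map]
          exact U.norm_toContinuousLinearMap_le
      _ ≤ ‖S i‖ * ‖U f‖ := (S i).le_opNorm _
      _ = ‖T i‖ * ‖f‖ := by rw [adjoint.norm_map, U.norm_map]

/-- let `(T,h)` be a cyclic commuting tuple on a Hilbert space `H`, and let
`H(F)` be the RKHS of the kernel `F(z,w) = ⟨e^{⟨T,w⟩}h, e^{⟨T,z⟩}h⟩`, modeled by an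
injective linear map `E : HF → ((Fin n → ℂ) → ℂ)` with kernel vectors `k w` satisfying
the reproducing property and whose span is dense.  Then each member of `H(F)` is entire,
and for each `i` the partial derivative `∂_i` maps `H(F)` into itself with
`‖∂_i f‖ ≤ ‖T_i‖·‖f‖`. -/
theorem stmt6 {H : Type*} [NormedAddCommGroup H] [InnerProductSpace ℂ H] [CompleteSpace H]
    {n : ℕ} (T : Fin n → H →L[ℂ] H) (hcomm : ∀ i j, T i ∘L T j = T j ∘L T i) (h : H)
    (hcyc : (Submodule.span ℂ
      (Set.range fun α : Fin n → ℕ => opPow T α h)).topologicalClosure = ⊤)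
    {HF : Type*} [NormedAddCommGroup HF] [InnerProductSpace ℂ HF] [CompleteSpace HF]
    (E : HF →ₗ[ℂ] ((Fin n → ℂ) → ℂ)) (hEinj : Function.Injective E)
    (k : (Fin n → ℂ) → HF)
    (hrepro : ∀ (f : HF) (w : Fin n → ℂ), E f w = inner ℂ (k w) f)
    (hker : ∀ z w : Fin n → ℂ, E (k w) z = kerF T h z w)
    (hspan : (Submodule.span ℂ (Set.range k)).topologicalClosure = ⊤)
    (i : Fin n) :
    ∀ f : HF, Differentiable ℂ (E f) ∧
      ∃ g : HF, (∀ z, E g z = fderiv ℂ (E f) z (Pi.single i 1)) ∧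
        ‖g‖ ≤ ‖T i‖ * ‖f‖ :=
  stmt6_general T hcomm h E k hrepro hker hspan i
end

section
/- Let (T,h) be a cyclic commuting n-tuple on a Hilbert space H, and F(z,w) = ⟨e^{⟨T,w⟩}h, e^{⟨T,z⟩}h⟩_H. Then there is a unitary operator U : H → H(F) such that T_i* = U* ∂_i U for i = 1,…,n, where ∂_i is the (bounded) differentiation operator on H(F). -/
open scoped BigOperators

/-!
The vectors `e^{⟨T,w⟩} h` and the kernel functions `k w` have the same Gram matrix `F`, and both
families span dense subspaces: the `k w` because `H(F)` is the RKHS of `F`, the `e^{⟨T,w⟩} h`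
because their closed span contains `h` and is invariant under each `T i` (`T i x` is the
derivative at `0` of `s ↦ e^{s T i} x`, which stays in the span), hence contains every `T^α h`.
So `e^{⟨T,w⟩} h ↦ k w` extends to a unitary `U : H → H(F)`. The element `U v` of `H(F)` is the
function `z ↦ ⟪h, e^{∑ z_i T_i*} v⟫`, whose `i`-th partial derivative is
`z ↦ ⟪h, e^{∑ z_i T_i*} T_i* v⟫` since the `T_i*` commute; that is, `∂_i = U T_i* U*`.
-/

open NormedSpace

theorem denseRange_linearCombination {α R M : Type*} [Semiring R] [TopologicalSpace M]
    [AddCommMonoid M] [Module R M] [ContinuousAdd M] [ContinuousConstSMul R M] {v : α → M}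
    (hv : (Submodule.span R (Set.range v)).topologicalClosure = ⊤) :
    DenseRange (Finsupp.linearCombination R v) := by
  rw [DenseRange, ← LinearMap.coe_range, Finsupp.range_linearCombination,
    Submodule.dense_iff_topologicalClosure_eq_top, hv]

theorem exists_linearIsometryEquiv_apply_eq_of_inner_eq {ι 𝕜 E F : Type*} [RCLike 𝕜]
    [NormedAddCommGroup E] [InnerProductSpace 𝕜 E] [CompleteSpace E]
    [NormedAddCommGroup F] [InnerProductSpace 𝕜 F] [CompleteSpace F] {u : ι → E} {v : ι → F}
    (huv : ∀ i j, inner 𝕜 (u i) (u j) = inner 𝕜 (v i) (v j))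
    (hu : (Submodule.span 𝕜 (Set.range u)).topologicalClosure = ⊤)
    (hv : (Submodule.span 𝕜 (Set.range v)).topologicalClosure = ⊤) :
    ∃ U : E ≃ₗᵢ[𝕜] F, ∀ i, U (u i) = v i := by
  set L := Finsupp.linearCombination 𝕜 u
  set M := Finsupp.linearCombination 𝕜 v
  have hinner : ∀ c d, inner 𝕜 (L c) (L d) = inner 𝕜 (M c) (M d) := by
    intro c d
    induction c using Finsupp.induction_linear with
    | zero => simp
    | add c₁ c₂ h₁ h₂ => simp [inner_add_left, h₁, h₂]
    | single i a =>
      induction d using Finsupp.induction_linear with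
      | zero => simp
      | add d₁ d₂ h₁ h₂ => simp [inner_add_right, h₁, h₂]
      | single j b => simp [L, M, inner_smul_left, inner_smul_right, huv]
  have hnorm : ∀ c, ‖M (LinearEquiv.refl 𝕜 _ c)‖ = ‖L c‖ := fun c => by
    rw [LinearEquiv.refl_apply, norm_eq_sqrt_re_inner (𝕜 := 𝕜), norm_eq_sqrt_re_inner (𝕜 := 𝕜),
      hinner]
  have hL := denseRange_linearCombination hu
  have hM := denseRange_linearCombination hv
  refine ⟨(LinearEquiv.refl 𝕜 _).extendOfIsometry L M hL hM hnorm, fun i => ?_⟩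
  simpa [L, M] using
    (LinearEquiv.refl 𝕜 _).extendOfIsometry_eq L M hL hM hnorm (Finsupp.single i 1)

section TupleExp

variable {ι 𝕂 𝔸 : Type*} [Fintype ι] [RCLike 𝕂] [NormedRing 𝔸] [NormedAlgebra 𝕂 𝔸]

noncomputable def tupleExp (X : ι → 𝔸) (z : ι → 𝕂) : 𝔸 :=
  exp (∑ i, z i • X i)

variable {X : ι → 𝔸}

theorem commute_sum_smul (hX : ∀ i j, Commute (X i) (X j)) (z w : ι → 𝕂) :
    Commute (∑ i, z i • X i) (∑ j, w j • X j) :=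
  Commute.sum_left _ _ _ fun i _ => Commute.sum_right _ _ _ fun j _ =>
    ((hX i j).smul_left _).smul_right _

theorem tupleExp_add [CompleteSpace 𝔸] (hX : ∀ i j, Commute (X i) (X j)) (z w : ι → 𝕂) :
    tupleExp X (z + w) = tupleExp X z * tupleExp X w := by
  simp only [tupleExp, Pi.add_apply, add_smul, Finset.sum_add_distrib]
  exact exp_add_of_commute_of_mem_ball (𝕂 := 𝕂) (commute_sum_smul hX z w)
    ((expSeries_radius_eq_top 𝕂 𝔸).symm ▸ edist_lt_top _ _)
    ((expSeries_radius_eq_top 𝕂 𝔸).symm ▸ edist_lt_top _ _)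

@[simp]
theorem tupleExp_zero : tupleExp X (0 : ι → 𝕂) = 1 := by
  simp [tupleExp]

theorem tupleExp_single [DecidableEq ι] (i : ι) (s : 𝕂) :
    tupleExp X (Pi.single i s) = exp (s • X i) := by
  simp [tupleExp, Pi.single_apply, ite_smul]

theorem hasFDerivAt_tupleExp [CompleteSpace 𝔸] (hX : ∀ i j, Commute (X i) (X j)) (z : ι → 𝕂) :
    HasFDerivAt (tupleExp X)
      (tupleExp X z • LinearMap.toContinuousLinearMap (Fintype.linearCombination 𝕂 X)) z := by
  set S := LinearMap.toContinuousLinearMap (Fintype.linearCombination 𝕂 X)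
  have hexp : HasFDerivAt (fun w => exp (S w)) S 0 := by
    have h0 : HasFDerivAt exp (1 : 𝔸 →L[𝕂] 𝔸) (S 0) := by
      simpa using hasFDerivAt_exp_zero (𝕂 := 𝕂) (𝔸 := 𝔸)
    have := h0.comp (0 : ι → 𝕂) S.hasFDerivAt
    rwa [ContinuousLinearMap.one_def, ContinuousLinearMap.id_comp] at this
  have hshift : (fun w => tupleExp X (z + w)) = fun w => tupleExp X z * exp (S w) := by
    funext w
    rw [tupleExp_add hX]
    simp [S, tupleExp, Fintype.linearCombination_apply]
  simpa using (hasFDerivAt_comp_add_left (f := tupleExp X) z (x := 0)).1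
    (hshift ▸ hexp.const_mul (tupleExp X z))

theorem star_tupleExp [StarRing 𝔸] [ContinuousStar 𝔸] [StarModule 𝕂 𝔸] (X : ι → 𝔸)
    (z : ι → 𝕂) : star (tupleExp X z) = tupleExp (star X) (star z) := by
  simp [tupleExp, star_exp, star_sum, star_smul]

theorem fderiv_inner_tupleExp_apply_single {𝕜 H : Type*} [RCLike 𝕜] [NormedAddCommGroup H]
    [InnerProductSpace 𝕜 H] [CompleteSpace H] [DecidableEq ι] {X : ι → H →L[𝕜] H}
    (hX : ∀ i j, Commute (X i) (X j)) (h v : H) (z : ι → 𝕜) (i : ι) :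
    fderiv 𝕜 (fun z => inner 𝕜 h (tupleExp X z v)) z (Pi.single i 1)
      = inner 𝕜 h (tupleExp X z (X i v)) := by
  have hd := ((innerSL 𝕜 h).comp (ContinuousLinearMap.apply 𝕜 H v)).hasFDerivAt.comp z
    (hasFDerivAt_tupleExp hX z)
  rw [show fderiv 𝕜 (fun z => inner 𝕜 h (tupleExp X z v)) z = _ from hd.fderiv]
  simp only [ContinuousLinearMap.comp_apply, smul_apply, LinearMap.coe_toContinuousLinearMap',
    Fintype.linearCombination_apply_single, one_smul, smul_eq_mul, ContinuousLinearMap.apply_apply,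
    innerSL_apply_apply]
  rfl

end TupleExp

theorem apply_mem_of_forall_exp_smul_apply_mem {𝕂 E : Type*} [RCLike 𝕂] [NormedAddCommGroup E]
    [NormedSpace 𝕂 E] [CompleteSpace E] {K : Submodule 𝕂 E} (hK : IsClosed (K : Set E))
    {S : E →L[𝕂] E} {x : E} (hx : ∀ s : 𝕂, exp (s • S) x ∈ K) : S x ∈ K := by
  have hderiv : HasDerivAt (fun s : 𝕂 => exp (s • S) x) (S x) 0 := by
    simpa using (hasDerivAt_exp_smul_const (𝕂 := 𝕂) S 0).clm_apply (hasDerivAt_const 0 x)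
  refine hK.mem_of_tendsto (hasDerivAt_iff_tendsto_slope.1 hderiv)
    (Filter.Eventually.of_forall fun s => ?_)
  exact K.smul_mem _ (K.sub_mem (hx s) (hx 0))

theorem opPow_apply_mem {H : Type*} [NormedAddCommGroup H] [NormedSpace ℂ H] {n : ℕ}
    {T : Fin n → H →L[ℂ] H} {K : Submodule ℂ H} (hT : ∀ i, Set.MapsTo (T i) K K) {x : H}
    (hx : x ∈ K) (α : Fin n → ℕ) : opPow T α x ∈ K := by
  refine List.prod_induction (fun A : H →L[ℂ] H => Set.MapsTo A K K)
    (fun A B hA hB => hA.comp hB) (Set.mapsTo_id _) ?_ hx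
  simp only [List.mem_ofFn, forall_exists_index]
  rintro _ i rfl
  simpa using (hT i).iterate (α i)

theorem span_tupleExp_apply_dense {H : Type*} [NormedAddCommGroup H] [NormedSpace ℂ H]
    [CompleteSpace H] {n : ℕ} {T : Fin n → H →L[ℂ] H} (hT : ∀ i j, Commute (T i) (T j)) {h : H}
    (hcyc : (Submodule.span ℂ
      (Set.range fun α : Fin n → ℕ => opPow T α h)).topologicalClosure = ⊤) :
    (Submodule.span ℂ (Set.range fun c : Fin n → ℂ => tupleExp T c h)).topologicalClosure = ⊤ := by
  set K := (Submodule.span ℂ (Set.range fun c : Fin n → ℂ => tupleExp T c h)).topologicalClosure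
  have hK : IsClosed (K : Set H) := Submodule.isClosed_topologicalClosure _
  have hgen : ∀ c, tupleExp T c h ∈ K := fun c =>
    Submodule.le_topologicalClosure _ (Submodule.subset_span ⟨c, rfl⟩)
  have hinv : ∀ i, Set.MapsTo (T i) K K := by
    intro i
    have hgen_le : Submodule.span ℂ (Set.range fun c : Fin n → ℂ => tupleExp T c h)
        ≤ K.comap (T i : H →ₗ[ℂ] H) := by
      refine Submodule.span_le.2 (Set.range_subset_iff.2 fun c => ?_)
      refine apply_mem_of_forall_exp_smul_apply_mem hK fun s => ?_
      rw [← tupleExp_single (X := T) i s, ← mul_apply_eq_comp, ← tupleExp_add hT]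
      exact hgen _
    exact fun x hx =>
      Submodule.topologicalClosure_minimal _ hgen_le (hK.preimage (T i).continuous) hx
  have hh : h ∈ K := by simpa using hgen 0
  refine eq_top_iff.2 (hcyc ▸ Submodule.topologicalClosure_minimal _ ?_ hK)
  exact Submodule.span_le.2 (Set.range_subset_iff.2 (opPow_apply_mem hinv hh))

open ContinuousLinearMap in
theorem stmt7_general {H : Type*} [NormedAddCommGroup H] [InnerProductSpace ℂ H] [CompleteSpace H]
    {n : ℕ} (T : Fin n → H →L[ℂ] H) (hcomm : ∀ i j, T i ∘L T j = T j ∘L T i) (h : H)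
    (hcyc : (Submodule.span ℂ
      (Set.range fun α : Fin n → ℕ => opPow T α h)).topologicalClosure = ⊤)
    {HF : Type*} [NormedAddCommGroup HF] [InnerProductSpace ℂ HF] [CompleteSpace HF]
    (E : HF →ₗ[ℂ] ((Fin n → ℂ) → ℂ))
    (k : (Fin n → ℂ) → HF)
    (hrepro : ∀ (f : HF) (w : Fin n → ℂ), E f w = inner ℂ (k w) f)
    (hker : ∀ z w : Fin n → ℂ, E (k w) z = kerF T h z w)
    (hspan : (Submodule.span ℂ (Set.range k)).topologicalClosure = ⊤) :
    ∃ D : Fin n → (HF →L[ℂ] HF),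
      (∀ (i : Fin n) (f : HF) (z : Fin n → ℂ),
        E (D i f) z = fderiv ℂ (E f) z (Pi.single i 1)) ∧
      ∃ U : H ≃ₗᵢ[ℂ] HF, ∀ (i : Fin n) (v : H),
        ContinuousLinearMap.adjoint (T i) v = U.symm (D i (U v)) := by
  have hT : ∀ i j, Commute (T i) (T j) := hcomm
  -- `tupleExp T (star w) = e^{⟨T,w⟩}`, so by `hker` the `k w` have the Gram matrix of the
  -- vectors `e^{⟨T,w⟩} h`.
  obtain ⟨U, hU⟩ : ∃ U : H ≃ₗᵢ[ℂ] HF, ∀ w, U (tupleExp T (star w) h) = k w := by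
    refine exists_linearIsometryEquiv_apply_eq_of_inner_eq (fun z w => ?_) ?_ hspan
    · rw [← hrepro, hker]
      rfl
    · rw [← Function.comp_def (fun c => tupleExp T c h) star,
        star_involutive.surjective.range_comp]
      exact span_tupleExp_apply_dense hT hcyc
  have hE : ∀ g z, E g z = inner ℂ h (tupleExp (star T) z (U.symm g)) := by
    intro g z
    rw [hrepro, ← hU, U.inner_map_eq_flip, ← adjoint_inner_right, ← star_eq_adjoint,
      star_tupleExp, star_star]
  let D i := U.toContinuousLinearEquiv.arrowCongr U.toContinuousLinearEquiv (star (T i))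
  refine ⟨D, fun i f z => ?_, U, fun i v => by simp [D, star_eq_adjoint]⟩
  rw [funext (hE f),
    fderiv_inner_tupleExp_apply_single (X := star T) (fun i j => (hT i j).star_star), hE]
  simp [D]

/-- for a cyclic commuting tuple `(T,h)` on a Hilbert space `H`, with
`H(F)` the RKHS of `F(z,w) = ⟨e^{⟨T,w⟩}h, e^{⟨T,z⟩}h⟩` (modeled as in Statement 6),
there are bounded differentiation operators `D i = ∂_i` on `H(F)` and a unitary
`U : H → H(F)` with `T_i* = U* ∘ ∂_i ∘ U` for all `i`. -/
theorem stmt7 {H : Type*} [NormedAddCommGroup H] [InnerProductSpace ℂ H] [CompleteSpace H]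
    {n : ℕ} (T : Fin n → H →L[ℂ] H) (hcomm : ∀ i j, T i ∘L T j = T j ∘L T i) (h : H)
    (hcyc : (Submodule.span ℂ
      (Set.range fun α : Fin n → ℕ => opPow T α h)).topologicalClosure = ⊤)
    {HF : Type*} [NormedAddCommGroup HF] [InnerProductSpace ℂ HF] [CompleteSpace HF]
    (E : HF →ₗ[ℂ] ((Fin n → ℂ) → ℂ)) (hEinj : Function.Injective E)
    (k : (Fin n → ℂ) → HF)
    (hrepro : ∀ (f : HF) (w : Fin n → ℂ), E f w = inner ℂ (k w) f)
    (hker : ∀ z w : Fin n → ℂ, E (k w) z = kerF T h z w)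
    (hspan : (Submodule.span ℂ (Set.range k)).topologicalClosure = ⊤) :
    ∃ D : Fin n → (HF →L[ℂ] HF),
      (∀ (i : Fin n) (f : HF) (z : Fin n → ℂ),
        E (D i f) z = fderiv ℂ (E f) z (Pi.single i 1)) ∧
      ∃ U : H ≃ₗᵢ[ℂ] HF, ∀ (i : Fin n) (v : H),
        ContinuousLinearMap.adjoint (T i) v = U.symm (D i (U v)) :=
  stmt7_general T hcomm h hcyc E k hrepro hker hspan
end

section
/- Let (T,h) be a cyclic commuting n-tuple on a Hilbert space H and λ ∈ ℂⁿ. Then λ is a joint eigenvalue of the adjoint tuple T* = (T₁*,…,T_n*) (i.e., there exists a nonzero v ∈ H with T_i* v = λ_i v for all i) if and only if there exists c > 0 such that |p(\bar{λ})| ≤ c·‖p(T)h‖_H for all polynomials p ∈ ℂ[z₁,…,z_n], where \bar{λ} = (conj(λ₁),…,conj(λ_n)). -/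
open scoped BigOperators

/-- `p(T)h` for a polynomial `p ∈ ℂ[z₁,…,z_n]`. -/
noncomputable def evalTuple {H : Type*} [NormedAddCommGroup H] [NormedSpace ℂ H]
    {n : ℕ} (T : Fin n → H →L[ℂ] H) (h : H) (p : MvPolynomial (Fin n) ℂ) : H :=
  ∑ α ∈ p.support, p.coeff α • opPow T (fun i => α i) h

/-! A joint eigenvector `v` of `T*` is the same as a nonzero functional `ℓ = ⟪v, ·⟫` with
`ℓ ∘ Tᵢ = λ̄ᵢ ℓ`. Such an `ℓ` satisfies `ℓ (p(T)h) = p(λ̄) ℓ h`, and `ℓ h ≠ 0` because `h` is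
cyclic, so `c = ‖ℓ‖ / |ℓ h|` works. Conversely, the bound makes `p(T)h ↦ p(λ̄)` a well-defined
bounded functional on the dense subspace `{p(T)h}`; a Hahn–Banach extension `ℓ` has `ℓ h = 1`, and
`ℓ ∘ Tᵢ = λ̄ᵢ ℓ` holds on `{p(T)h}` since `Tᵢ (p(T)h) = (Xᵢ p)(T)h`, hence everywhere. -/

open MvPolynomial

section evalTuple

variable {H : Type*} [NormedAddCommGroup H] [NormedSpace ℂ H] {n : ℕ} (T : Fin n → H →L[ℂ] H)
  (h : H)

theorem opPow_zero : opPow T 0 = 1 :=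
  List.prod_eq_one <| by simp

open scoped IsMulCommutative in
theorem opPow_add_single (hcomm : ∀ i j, T i ∘L T j = T j ∘L T i) (α : Fin n → ℕ) (i : Fin n) :
    opPow T (α + Pi.single i 1) = T i * opPow T α := by
  let S := Submonoid.closure (Set.range T)
  have : IsMulCommutative S := Submonoid.isMulCommutative_closure _ <| by
    rintro _ ⟨j, rfl⟩ _ ⟨k, rfl⟩
    exact hcomm j k
  -- in the commutative monoid generated by the `Tⱼ`, `opPow T β` is the monomial `∏ Tⱼ ^ βⱼ`
  let t : Fin n → S := fun j => ⟨T j, Submonoid.subset_closure ⟨j, rfl⟩⟩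
  have hprod : ∀ β, opPow T β = ((∏ j, t j ^ β j : S) : H →L[ℂ] H) := by
    intro β
    rw [← List.prod_ofFn, opPow, ← S.coe_subtype, map_list_prod, List.map_ofFn]
    rfl
  have hsingle : ∏ j, t j ^ (Pi.single i 1 : Fin n → ℕ) j = t i := by
    simp [Pi.single_apply, pow_ite]
  rw [hprod, hprod, Pi.add_def]
  simp only [pow_add, Finset.prod_mul_distrib, hsingle, mul_comm _ (t i)]
  rfl

theorem evalTuple_eq_sum_of_support_subset (p : MvPolynomial (Fin n) ℂ)
    {s : Finset (Fin n →₀ ℕ)} (hs : p.support ⊆ s) :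
    evalTuple T h p = ∑ α ∈ s, p.coeff α • opPow T α h :=
  Finset.sum_subset hs fun α _ hα => by simp [notMem_support_iff.mp hα]

noncomputable def evalTupleₗ : MvPolynomial (Fin n) ℂ →ₗ[ℂ] H where
  toFun := evalTuple T h
  map_add' p q := by
    classical
    rw [evalTuple_eq_sum_of_support_subset T h _ support_add,
      evalTuple_eq_sum_of_support_subset T h p Finset.subset_union_left,
      evalTuple_eq_sum_of_support_subset T h q Finset.subset_union_right,
      ← Finset.sum_add_distrib]
    simp only [coeff_add, add_smul]
  map_smul' a p := by
    rw [evalTuple_eq_sum_of_support_subset T h _ support_smul, evalTuple, Finset.smul_sum]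
    simp only [coeff_smul, smul_smul, smul_eq_mul, RingHom.id_apply]

@[simp]
theorem evalTupleₗ_apply (p : MvPolynomial (Fin n) ℂ) : evalTupleₗ T h p = evalTuple T h p :=
  rfl

theorem evalTuple_add (p q : MvPolynomial (Fin n) ℂ) :
    evalTuple T h (p + q) = evalTuple T h p + evalTuple T h q :=
  (evalTupleₗ T h).map_add p q

theorem evalTuple_monomial (α : Fin n →₀ ℕ) (a : ℂ) :
    evalTuple T h (monomial α a) = a • opPow T α h := by
  classical
  rw [evalTuple_eq_sum_of_support_subset T h _ support_monomial_subset]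
  simp

theorem evalTuple_C (a : ℂ) : evalTuple T h (C a) = a • h := by
  simp [← monomial_zero', evalTuple_monomial, opPow_zero]

theorem evalTuple_X_mul (hcomm : ∀ i j, T i ∘L T j = T j ∘L T i) (i : Fin n)
    (p : MvPolynomial (Fin n) ℂ) :
    evalTuple T h (X i * p) = T i (evalTuple T h p) := by
  induction p using MvPolynomial.induction_on' with
  | monomial α a =>
    rw [X, monomial_mul, one_mul, evalTuple_monomial, evalTuple_monomial, add_comm,
      Finsupp.coe_add, Finsupp.single_eq_pi_single, opPow_add_single T hcomm, map_smul]
    rfl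
  | add p q hp hq =>
    rw [mul_add, evalTuple_add, evalTuple_add, hp, hq, map_add]

theorem denseRange_evalTuple
    (hcyc : (Submodule.span ℂ
      (Set.range fun α : Fin n → ℕ => opPow T α h)).topologicalClosure = ⊤) :
    DenseRange (evalTuple T h) := by
  have hspan : Submodule.span ℂ (Set.range fun α : Fin n → ℕ => opPow T α h) ≤
      LinearMap.range (evalTupleₗ T h) := by
    rw [Submodule.span_le]
    rintro _ ⟨α, rfl⟩
    exact ⟨monomial (Finsupp.equivFunOnFinite.symm α) 1, by simp [evalTuple_monomial]⟩
  exact Submodule.dense_iff_topologicalClosure_eq_top.2 <|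
    top_le_iff.1 <| hcyc ▸ Submodule.topologicalClosure_mono hspan

end evalTuple

theorem LinearMap.exists_strongDual_comp_eq_of_norm_le_s8 {𝕜 V E : Type*} [RCLike 𝕜]
    [AddCommGroup V] [Module 𝕜 V] [NormedAddCommGroup E] [NormedSpace 𝕜 E]
    (f : V →ₗ[𝕜] E) (e : V →ₗ[𝕜] 𝕜) {c : ℝ} (hb : ∀ p, ‖e p‖ ≤ c * ‖f p‖) :
    ∃ ℓ : StrongDual 𝕜 E, ∀ p, ℓ (f p) = e p := by
  have hker : LinearMap.ker f ≤ LinearMap.ker e := fun p hp => by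
    simpa [LinearMap.mem_ker.mp hp] using hb p
  let φ : LinearMap.range f →ₗ[𝕜] 𝕜 :=
    (LinearMap.ker f).liftQ e hker ∘ₗ f.quotKerEquivRange.symm.toLinearMap
  have hφ : ∀ p, φ (f.rangeRestrict p) = e p := fun p =>
    congrArg _ (f.quotKerEquivRange_symm_apply_image p _)
  have hφb : ∀ x, ‖φ x‖ ≤ c * ‖x‖ := by
    rintro ⟨_, p, rfl⟩
    exact (hφ p).symm ▸ hb p
  obtain ⟨ℓ, hℓ, -⟩ := exists_extension_norm_eq _ (φ.mkContinuous c hφb)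
  exact ⟨ℓ, fun p => (hℓ (f.rangeRestrict p)).trans (hφ p)⟩

section Adjoint

variable {𝕜 E : Type*} [RCLike 𝕜] [NormedAddCommGroup E] [InnerProductSpace 𝕜 E]
  [CompleteSpace E]

open InnerProductSpace ContinuousLinearMap

theorem toDual_comp_eq_smul_iff (S : E →L[𝕜] E) (v : E) (μ : 𝕜) :
    toDual 𝕜 E v ∘L S = starRingEnd 𝕜 μ • toDual 𝕜 E v ↔ adjoint S v = μ • v := by
  have hadj : toDual 𝕜 E (adjoint S v) = toDual 𝕜 E v ∘L S := by
    ext x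
    simp [toDual_apply_apply, adjoint_inner_left]
  rw [← (toDual 𝕜 E).injective.eq_iff, hadj, LinearIsometryEquiv.map_smulₛₗ]

theorem exists_adjoint_eigenvector_iff {ι : Type*} (S : ι → E →L[𝕜] E) (μ : ι → 𝕜) :
    (∃ v : E, v ≠ 0 ∧ ∀ i, adjoint (S i) v = μ i • v) ↔
      ∃ ℓ : StrongDual 𝕜 E, ℓ ≠ 0 ∧ ∀ i, ℓ ∘L S i = starRingEnd 𝕜 (μ i) • ℓ := by
  rw [(toDual 𝕜 E).surjective.exists]
  simp only [ne_eq, LinearIsometryEquiv.map_eq_zero_iff, toDual_comp_eq_smul_iff]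

end Adjoint

section JointEigenfunctional

variable {H : Type*} [NormedAddCommGroup H] [NormedSpace ℂ H] {n : ℕ} {T : Fin n → H →L[ℂ] H}
  {h : H} {μ : Fin n → ℂ}

theorem apply_evalTuple_of_comp_eq_smul (hcomm : ∀ i j, T i ∘L T j = T j ∘L T i)
    {ℓ : StrongDual ℂ H} (hℓ : ∀ i, ℓ ∘L T i = μ i • ℓ) (p : MvPolynomial (Fin n) ℂ) :
    ℓ (evalTuple T h p) = eval μ p * ℓ h := by
  induction p using MvPolynomial.induction_on with
  | C a => simp [evalTuple_C]
  | add p q hp hq => rw [evalTuple_add, map_add, hp, hq, eval_add, add_mul]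
  | mul_X p i hp =>
    rw [mul_comm, evalTuple_X_mul T h hcomm, ← ContinuousLinearMap.comp_apply, hℓ,
      smul_apply, hp, eval_mul, eval_X, smul_eq_mul, mul_assoc]

theorem exists_norm_eval_le_of_comp_eq_smul (hcomm : ∀ i j, T i ∘L T j = T j ∘L T i)
    (hdense : DenseRange (evalTuple T h))
    {ℓ : StrongDual ℂ H} (hℓ0 : ℓ ≠ 0) (hℓ : ∀ i, ℓ ∘L T i = μ i • ℓ) :
    ∃ c : ℝ, 0 < c ∧ ∀ p, ‖eval μ p‖ ≤ c * ‖evalTuple T h p‖ := by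
  have hℓh : 0 < ‖ℓ h‖ := by
    refine norm_pos_iff.2 fun hzero => hℓ0 <| DFunLike.coe_injective <|
      hdense.equalizer ℓ.continuous continuous_zero <| funext fun p => ?_
    simp [apply_evalTuple_of_comp_eq_smul hcomm hℓ, hzero]
  refine ⟨‖ℓ‖ / ‖ℓ h‖, div_pos (norm_pos_iff.2 hℓ0) hℓh, fun p => ?_⟩
  rw [div_mul_eq_mul_div, le_div_iff₀ hℓh, ← norm_mul,
    ← apply_evalTuple_of_comp_eq_smul hcomm hℓ]
  exact ℓ.le_opNorm _

theorem exists_comp_eq_smul_of_norm_eval_le (hcomm : ∀ i j, T i ∘L T j = T j ∘L T i)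
    (hdense : DenseRange (evalTuple T h)) {c : ℝ}
    (hb : ∀ p, ‖eval μ p‖ ≤ c * ‖evalTuple T h p‖) :
    ∃ ℓ : StrongDual ℂ H, ℓ ≠ 0 ∧ ∀ i, ℓ ∘L T i = μ i • ℓ := by
  obtain ⟨ℓ, hℓ⟩ :=
    (evalTupleₗ T h).exists_strongDual_comp_eq_of_norm_le_s8 (aeval μ).toLinearMap hb
  replace hℓ : ∀ p, ℓ (evalTuple T h p) = eval μ p := hℓ
  refine ⟨ℓ, fun hzero => by simpa [hzero, evalTuple_C] using hℓ 1, fun i => ?_⟩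
  refine DFunLike.coe_injective <|
    hdense.equalizer (ℓ ∘L T i).continuous (μ i • ℓ).continuous <| funext fun p => ?_
  simp [← evalTuple_X_mul T h hcomm, hℓ]

end JointEigenfunctional

/-- for a cyclic commuting tuple `(T,h)` on a Hilbert space `H` and
`λ ∈ ℂⁿ`, `λ` is a joint eigenvalue of `T* = (T₁*,…,T_n*)` iff there is `c > 0` with
`|p(λ̄)| ≤ c·‖p(T)h‖` for all polynomials `p`. -/
theorem stmt8 {H : Type*} [NormedAddCommGroup H] [InnerProductSpace ℂ H] [CompleteSpace H]
    {n : ℕ} (T : Fin n → H →L[ℂ] H) (hcomm : ∀ i j, T i ∘L T j = T j ∘L T i) (h : H)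
    (hcyc : (Submodule.span ℂ
      (Set.range fun α : Fin n → ℕ => opPow T α h)).topologicalClosure = ⊤)
    (lam : Fin n → ℂ) :
    (∃ v : H, v ≠ 0 ∧ ∀ i, ContinuousLinearMap.adjoint (T i) v = lam i • v) ↔
    (∃ c : ℝ, 0 < c ∧ ∀ p : MvPolynomial (Fin n) ℂ,
      ‖MvPolynomial.eval (fun i => (starRingEnd ℂ) (lam i)) p‖ ≤ c * ‖evalTuple T h p‖) := by
  have hdense := denseRange_evalTuple T h hcyc
  rw [exists_adjoint_eigenvector_iff]
  constructor
  · rintro ⟨ℓ, hℓ0, hℓ⟩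
    exact exists_norm_eval_le_of_comp_eq_smul hcomm hdense hℓ0 hℓ
  · rintro ⟨c, -, hb⟩
    exact exists_comp_eq_smul_of_norm_eval_le hcomm hdense hb
end

section
/- Let (T,h) be a cyclic commuting n-tuple on H and λ ∈ ℂⁿ. Then λ is a joint eigenvalue of T* if and only if for some c > 0 the infinite matrix [c²⟨T^α h, T^β h⟩_H − conj(λ)^α λ^β]_{α,β∈ℕ₀ⁿ} is positive semidefinite (i.e., every finite submatrix indexed by multi-indices is positive semidefinite). -/
open scoped ComplexOrder BigOperators

/-! If `T_i* v = λ_i v` for all `i`, then `⟪v, T^α h⟫ = conj(λ)^α ⟪v, h⟫`, and `⟪v, h⟫ ≠ 0` because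
the `T^α h` span a dense subspace; so a multiple `w` of `v` satisfies `⟪w, T^α h⟫ = conj(λ)^α`.
Conversely such a `w` is a joint eigenvector of the `T_i*`: `T_i* w - λ_i w` is orthogonal to
every `T^α h`, since `T_i T^α = T^(α + e_i)`.

By Hahn–Banach and Riesz, a `w` with `‖w‖ ≤ c` and prescribed inner products `μ_α` with the `T^α h`
exists iff `‖∑ d_α μ_α‖ ≤ c ‖∑ d_α T^α h‖` for all finitely supported `d`. With `d = conj ξ`,
the Hermitian form of `[c² ⟪T^β h, T^α h⟫ - μ_α conj(μ_β)]` at `ξ` equals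
`c² ‖∑ d_α T^α h‖² - ‖∑ d_α μ_α‖²`, so that matrix is positive semidefinite iff the bound holds. -/

open Finset Finsupp ContinuousLinearMap

theorem Finsupp.exists_eq_sum_fin_single {ι M : Type*} [AddCommMonoid M] (d : ι →₀ M) :
    ∃ (m : ℕ) (A : Fin m → ι) (a : Fin m → M), ∑ t, single (A t) (a t) = d := by
  let e := d.support.equivFin.symm
  refine ⟨_, fun t => e t, fun t => d (e t), ?_⟩
  rw [Equiv.sum_comp e fun i => single (i : ι) (d i),
    sum_coe_sort d.support fun i => single i (d i)]
  exact d.sum_single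

section InnerProductSpace

variable {𝕜 E ι : Type*} [RCLike 𝕜] [NormedAddCommGroup E] [InnerProductSpace 𝕜 E]

local notation "⟪" x ", " y "⟫" => inner 𝕜 x y
local notation "conj" => starRingEnd 𝕜

theorem inner_linearCombination (v : E) (x : ι → E) (d : ι →₀ 𝕜) :
    ⟪v, linearCombination 𝕜 x d⟫ = linearCombination 𝕜 (fun i => ⟪v, x i⟫) d :=
  apply_linearCombination 𝕜 (innerₛₗ 𝕜 v) x d

theorem eq_zero_of_inner_eq_zero_of_dense_span {x : ι → E}
    (hx : (Submodule.span 𝕜 (Set.range x)).topologicalClosure = ⊤) {z : E}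
    (hz : ∀ i, ⟪z, x i⟫ = 0) : z = 0 :=
  (Submodule.dense_iff_topologicalClosure_eq_top.2 hx).eq_zero_of_inner_left 𝕜 fun _ hv =>
    Submodule.span_le (p := LinearMap.ker (innerₛₗ 𝕜 z)) |>.2 (Set.range_subset_iff.2 hz) hv

theorem exists_norm_le_inner_eq_iff [CompleteSpace E] (x : ι → E) (μ : ι → 𝕜) {c : ℝ}
    (hc : 0 ≤ c) :
    (∃ v : E, ‖v‖ ≤ c ∧ ∀ i, ⟪v, x i⟫ = μ i) ↔
      ∀ d : ι →₀ 𝕜, ‖linearCombination 𝕜 μ d‖ ≤ c * ‖linearCombination 𝕜 x d‖ := by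
  constructor
  · rintro ⟨v, hv, hvx⟩ d
    have hμ : μ = fun i => ⟪v, x i⟫ := funext fun i => (hvx i).symm
    calc ‖linearCombination 𝕜 μ d‖ = ‖⟪v, linearCombination 𝕜 x d⟫‖ := by
          rw [inner_linearCombination, hμ]
      _ ≤ ‖v‖ * ‖linearCombination 𝕜 x d‖ := norm_inner_le_norm _ _
      _ ≤ c * ‖linearCombination 𝕜 x d‖ := by gcongr
  · intro hbound
    set π := linearCombination 𝕜 x
    have hker : LinearMap.ker π ≤ LinearMap.ker (linearCombination 𝕜 μ) := fun d hd => by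
      simpa [LinearMap.mem_ker.1 hd] using hbound d
    let φ : LinearMap.range π →ₗ[𝕜] 𝕜 :=
      (LinearMap.ker π).liftQ _ hker ∘ₗ π.quotKerEquivRange.symm.toLinearMap
    have hφ : ∀ d, φ (π.rangeRestrict d) = linearCombination 𝕜 μ d := fun d => by
      simp only [φ, LinearMap.comp_apply, LinearEquiv.coe_coe]
      rw [show π.rangeRestrict d = ⟨π d, LinearMap.mem_range_self π d⟩ from rfl,
        LinearMap.quotKerEquivRange_symm_apply_image]
      rfl
    have hφc : ∀ u, ‖φ u‖ ≤ c * ‖u‖ := by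
      rintro ⟨_, d, rfl⟩
      exact (hφ d).symm ▸ hbound d
    obtain ⟨F, hF, hFnorm⟩ := exists_extension_norm_eq _ (φ.mkContinuous c hφc)
    refine ⟨(InnerProductSpace.toDual 𝕜 E).symm F, ?_, fun i => ?_⟩
    · rw [LinearIsometryEquiv.norm_map, hFnorm]
      exact LinearMap.mkContinuous_norm_le _ hc hφc
    · rw [InnerProductSpace.toDual_symm_apply]
      have hFi := hF (π.rangeRestrict (single i 1))
      rw [LinearMap.mkContinuous_apply, hφ] at hFi
      simpa [π] using hFi

theorem sum_gram_sub_rankOne_eq {m : ℕ} (x : ι → E) (μ : ι → 𝕜) (c : ℝ) (A : Fin m → ι)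
    (ξ : Fin m → 𝕜) :
    ∑ s, ∑ t, conj (ξ s) * ξ t * ((c : 𝕜) ^ 2 * ⟪x (A t), x (A s)⟫ - μ (A s) * conj (μ (A t))) =
      (((c * ‖linearCombination 𝕜 x (∑ t, single (A t) (conj (ξ t)))‖) ^ 2 -
        ‖linearCombination 𝕜 μ (∑ t, single (A t) (conj (ξ t)))‖ ^ 2 : ℝ) : 𝕜) := by
  simp only [map_sum, linearCombination_single, smul_eq_mul]
  push_cast
  rw [mul_pow, ← inner_self_eq_norm_sq_to_K, ← RCLike.conj_mul]
  simp only [sum_inner, inner_sum, inner_smul_left, inner_smul_right, map_sum, map_mul,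
    RCLike.conj_conj, Finset.mul_sum, Finset.sum_mul, ← Finset.sum_sub_distrib]
  exact sum_congr rfl fun _ _ => sum_congr rfl fun _ _ => by ring

theorem forall_sum_gram_sub_rankOne_nonneg_iff [CompleteSpace E] (x : ι → E) (μ : ι → 𝕜)
    {c : ℝ} (hc : 0 ≤ c) :
    (∀ (m : ℕ) (A : Fin m → ι) (ξ : Fin m → 𝕜), 0 ≤ ∑ s, ∑ t, conj (ξ s) * ξ t *
        ((c : 𝕜) ^ 2 * ⟪x (A t), x (A s)⟫ - μ (A s) * conj (μ (A t)))) ↔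
      ∃ v : E, ‖v‖ ≤ c ∧ ∀ i, ⟪v, x i⟫ = μ i := by
  simp_rw [sum_gram_sub_rankOne_eq, RCLike.ofReal_nonneg, sub_nonneg,
    sq_le_sq₀ (norm_nonneg _) (mul_nonneg hc (norm_nonneg _))]
  rw [exists_norm_le_inner_eq_iff x μ hc]
  refine ⟨fun h d => ?_, fun h m A ξ => h _⟩
  obtain ⟨m, A, a, rfl⟩ := d.exists_eq_sum_fin_single
  simpa using h m A (conj ∘ a)

end InnerProductSpace

section OperatorTuple

variable {H : Type*} [NormedAddCommGroup H] [NormedSpace ℂ H] {n : ℕ} {T : Fin n → H →L[ℂ] H}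

-- A named witness: an inline lambda leaves `noncommProd` terms that `rw` cannot rewrite.
theorem pairwise_commute_pow (hT : ∀ i j, Commute (T i) (T j)) (α : Fin n → ℕ)
    (s : Set (Fin n)) : s.Pairwise (Function.onFun Commute fun i => T i ^ α i) :=
  fun i _ j _ _ => (hT i j).pow_pow _ _

theorem opPow_eq_noncommProd (hT : ∀ i j, Commute (T i) (T j)) (α : Fin n → ℕ) :
    opPow T α = univ.noncommProd (fun i => T i ^ α i) (pairwise_commute_pow hT α _) := by
  simp only [opPow, noncommProd, Fin.univ_val_map, Multiset.noncommProd_coe]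

theorem opPow_add (hT : ∀ i j, Commute (T i) (T j)) (α β : Fin n → ℕ) :
    opPow T (α + β) = opPow T α * opPow T β := by
  simp only [opPow_eq_noncommProd hT, Pi.add_apply, pow_add]
  exact noncommProd_mul_distrib _ _ _ _ fun i _ j _ _ => (hT i j).pow_pow _ _

theorem opPow_single (hT : ∀ i j, Commute (T i) (T j)) (i : Fin n) :
    opPow T (Pi.single i 1) = T i := by
  classical
  rw [opPow_eq_noncommProd hT, ← mul_noncommProd_erase _ (mem_univ i), Pi.single_eq_same, pow_one]
  convert mul_one (T i)
  exact (noncommProd_eq_pow_card _ _ _ 1 fun j hj => by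
    simp [Pi.single_eq_of_ne (ne_of_mem_erase hj)]).trans (one_pow _)

end OperatorTuple

section HilbertOperatorTuple

variable {H : Type*} [NormedAddCommGroup H] [InnerProductSpace ℂ H] [CompleteSpace H] {n : ℕ}
  {T : Fin n → H →L[ℂ] H}

local notation "⟪" x ", " y "⟫" => inner ℂ x y
local notation "conj" => starRingEnd ℂ

theorem adjoint_opPow_apply {v : H} {lam : Fin n → ℂ} (hv : ∀ i, adjoint (T i) v = lam i • v)
    (α : Fin n → ℕ) : adjoint (opPow T α) v = (∏ i, lam i ^ α i) • v := by
  let S : Submonoid ((H →L[ℂ] H) × ℂ) :=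
    { carrier := {p | star p.1 v = p.2 • v}
      one_mem' := by simp
      mul_mem' := fun {p q} hp hq => by simp_all [star_mul, smul_smul] }
  have hmem : (List.ofFn fun i => (T i, lam i) ^ α i).prod ∈ S :=
    S.list_prod_mem <| by
      simp only [List.mem_ofFn, forall_exists_index, forall_apply_eq_imp_iff]
      exact fun i => pow_mem (show (T i, lam i) ∈ S from hv i) _
  have hfst := map_list_prod (MonoidHom.fst _ _) (List.ofFn fun i => (T i, lam i) ^ α i)
  have hsnd := map_list_prod (MonoidHom.snd _ _) (List.ofFn fun i => (T i, lam i) ^ α i)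
  simp only [List.map_ofFn, Function.comp_def, MonoidHom.coe_fst, MonoidHom.coe_snd, Prod.pow_fst,
    Prod.pow_snd, List.prod_ofFn] at hfst hsnd
  rw [opPow, ← hfst, ← hsnd, ← star_eq_adjoint]
  exact hmem

theorem exists_adjoint_eigenvector_iff_exists_inner_opPow_eq (hT : ∀ i j, Commute (T i) (T j))
    {h : H} (hcyc : (Submodule.span ℂ (Set.range fun α => opPow T α h)).topologicalClosure = ⊤)
    (lam : Fin n → ℂ) :
    (∃ v : H, v ≠ 0 ∧ ∀ i, adjoint (T i) v = lam i • v) ↔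
      ∃ w : H, ∀ α, ⟪w, opPow T α h⟫ = ∏ i, conj (lam i) ^ α i := by
  constructor
  · rintro ⟨v, hv0, hv⟩
    have hinner : ∀ α, ⟪v, opPow T α h⟫ = (∏ i, conj (lam i) ^ α i) * ⟪v, h⟫ := fun α => by
      rw [← adjoint_inner_left, adjoint_opPow_apply hv, inner_smul_left, map_prod]
      simp only [map_pow]
    have hκ : ⟪v, h⟫ ≠ 0 := fun h0 =>
      hv0 <| eq_zero_of_inner_eq_zero_of_dense_span hcyc fun α => by simp [hinner, h0]
    refine ⟨(conj ⟪v, h⟫)⁻¹ • v, fun α => ?_⟩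
    rw [inner_smul_left, hinner, RCLike.conj_inv, RCLike.conj_conj]
    field_simp
  · rintro ⟨w, hw⟩
    refine ⟨w, ?_, fun i => ?_⟩
    · rintro rfl
      simpa using hw 0
    · refine sub_eq_zero.1 (eq_zero_of_inner_eq_zero_of_dense_span hcyc fun α => ?_)
      rw [inner_sub_left, inner_smul_left, adjoint_inner_left, ← mul_apply_eq_comp,
        ← opPow_single hT i, ← opPow_add hT, hw, hw]
      simp only [Pi.add_apply, pow_add, prod_mul_distrib, sub_eq_zero]
      congr 1
      simp [Pi.single_apply]

end HilbertOperatorTuple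

/-- for a cyclic commuting tuple `(T,h)` on a Hilbert space `H` and
`λ ∈ ℂⁿ`, `λ` is a joint eigenvalue of `T*` iff for some `c > 0` the infinite matrix
`[c²⟨T^α h, T^β h⟩ − conj(λ)^α λ^β]_{α,β}` is positive semidefinite, i.e. every finite
submatrix indexed by multi-indices is positive semidefinite.  (Here the paper's inner
product `⟨x,y⟩`, linear in the first slot, is Mathlib's `inner y x`.) -/
theorem stmt9 {H : Type*} [NormedAddCommGroup H] [InnerProductSpace ℂ H] [CompleteSpace H]
    {n : ℕ} (T : Fin n → H →L[ℂ] H) (hcomm : ∀ i j, T i ∘L T j = T j ∘L T i) (h : H)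
    (hcyc : (Submodule.span ℂ
      (Set.range fun α : Fin n → ℕ => opPow T α h)).topologicalClosure = ⊤)
    (lam : Fin n → ℂ) :
    (∃ v : H, v ≠ 0 ∧ ∀ i, ContinuousLinearMap.adjoint (T i) v = lam i • v) ↔
    (∃ c : ℝ, 0 < c ∧
      ∀ (m : ℕ) (A : Fin m → (Fin n → ℕ)) (ξ : Fin m → ℂ),
        0 ≤ ∑ s, ∑ t, (starRingEnd ℂ) (ξ s) * ξ t *
          ((c : ℂ) ^ 2 * (inner ℂ (opPow T (A t) h) (opPow T (A s) h) : ℂ)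
            - (∏ i, (starRingEnd ℂ) (lam i) ^ (A s i)) * (∏ i, lam i ^ (A t i)))) := by
  have hgram := fun (c : ℝ) (hc : 0 ≤ c) => forall_sum_gram_sub_rankOne_nonneg_iff
    (fun α => opPow T α h) (fun α => ∏ i, starRingEnd ℂ (lam i) ^ α i) hc
  simp only [map_prod, map_pow, Complex.conj_conj] at hgram
  rw [exists_adjoint_eigenvector_iff_exists_inner_opPow_eq hcomm hcyc]
  constructor
  · rintro ⟨w, hw⟩
    exact ⟨‖w‖ + 1, by positivity, (hgram (‖w‖ + 1) (by positivity)).2 ⟨w, by linarith, hw⟩⟩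
  · rintro ⟨c, hc, hpsd⟩
    obtain ⟨w, -, hw⟩ := (hgram c hc.le).1 hpsd
    exact ⟨w, hw⟩
end

section
/- Let T be a bounded operator on a Hilbert space H and h ∈ H a cyclic vector for T. Then the following are equivalent: (1) T^m = 0 for some m ≥ 1; (2) there exists a finite collection of polynomials (p_k) such that ⟨p(T)h, q(T)h⟩ = Σ_k ⟨p, p_k⟩_{H²(ℂ)}·conj(⟨q, p_k⟩_{H²(ℂ)}) for all polynomials p, q (i.e., the associated positive operator L on the Fock space is a finite sum L = Σ_k p_k ⊗ p_k with polynomial vectors p_k). -/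
open scoped BigOperators

/-- The Fock-space inner product `⟨p, q⟩_{H²(ℂ)} = Σ_k k!·p_k·conj(q_k)` of two
polynomials (the paper's inner product, linear in the first slot). -/
noncomputable def fockInner (p q : Polynomial ℂ) : ℂ :=
  ∑ k ∈ Finset.range (p.natDegree + 1),
    (Nat.factorial k : ℂ) * p.coeff k * (starRingEnd ℂ) (q.coeff k)

/-!
If `T ^ m = 0`, the orbit of `h` spans a finite-dimensional, hence closed, subspace, so `H` is
finite-dimensional. For an orthonormal basis `b` of `H`, the functional `p ↦ ⟨b k, p(T) h⟩`
only sees the coefficients of `p` below `m`, so it is `⟨p, p_k⟩_{H²(ℂ)}` for an explicit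
polynomial `p_k` of degree `< m`, and Parseval gives the representation.

Conversely, if `d` exceeds the degrees of all `p_k`, then `X ^ d` is Fock-orthogonal to every
`p_k`, so `‖T ^ d h‖² = 0`. Since `T ^ d` commutes with `T`, it kills the orbit of the cyclic
vector `h`, hence all of `H`.
-/

open Polynomial
open scoped Nat

section Cyclic

variable {𝕜 E : Type*} [NontriviallyNormedField 𝕜] [NormedAddCommGroup E] [NormedSpace 𝕜 E]
  {T : E →L[𝕜] E} {h : E}

theorem ContinuousLinearMap.eq_zero_of_commute_of_apply_cyclic_eq_zero {S : E →L[𝕜] E}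
    (hcyc : (Submodule.span 𝕜 (Set.range fun n : ℕ => (T ^ n) h)).topologicalClosure = ⊤)
    (hST : Commute S T) (hSh : S h = 0) : S = 0 := by
  have horbit :
      Submodule.span 𝕜 (Set.range fun n : ℕ => (T ^ n) h) ≤ LinearMap.ker (S : E →ₗ[𝕜] E) := by
    rw [Submodule.span_le]
    rintro _ ⟨n, rfl⟩
    change S ((T ^ n) h) = 0
    rw [← mul_apply_eq_comp, (hST.pow_right n).eq, mul_apply_eq_comp, hSh, map_zero]
  have hclosure := Submodule.topologicalClosure_minimal _ horbit S.isClosed_ker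
  rw [hcyc, top_le_iff, LinearMap.ker_eq_top] at hclosure
  exact ContinuousLinearMap.coe_injective hclosure

theorem ContinuousLinearMap.pow_apply_eq_zero_of_le {m n : ℕ} (hm : (T ^ m) h = 0)
    (hmn : m ≤ n) : (T ^ n) h = 0 := by
  rw [← Nat.sub_add_cancel hmn, pow_add, mul_apply_eq_comp, hm, map_zero]

theorem finite_range_pow_apply_of_pow_apply_eq_zero {m : ℕ} (hm : (T ^ m) h = 0) :
    (Set.range fun n : ℕ => (T ^ n) h).Finite := by
  refine ((Set.finite_Iic m).image fun n => (T ^ n) h).subset ?_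
  rintro _ ⟨n, rfl⟩
  rcases le_total n m with hnm | hmn
  · exact ⟨n, hnm, rfl⟩
  · exact ⟨m, Set.mem_Iic.2 le_rfl, by simp only [hm, T.pow_apply_eq_zero_of_le hm hmn]⟩

theorem finiteDimensional_of_cyclic_of_pow_apply_eq_zero [CompleteSpace 𝕜] {m : ℕ}
    (hcyc : (Submodule.span 𝕜 (Set.range fun n : ℕ => (T ^ n) h)).topologicalClosure = ⊤)
    (hm : (T ^ m) h = 0) : FiniteDimensional 𝕜 E := by
  have := FiniteDimensional.span_of_finite 𝕜 (finite_range_pow_apply_of_pow_apply_eq_zero hm)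
  rw [(Submodule.closed_of_finiteDimensional _).submodule_topologicalClosure_eq] at hcyc
  rw [hcyc] at this
  exact Submodule.topEquiv.finiteDimensional

end Cyclic

section Fock

variable {H : Type*} [NormedAddCommGroup H] [InnerProductSpace ℂ H]

/-- The Fock-space Riesz representative of `p ↦ ⟨v, p(T) h⟩` when `T ^ m h = 0`: the factor
`1 / i!` cancels the weight `i!` of `fockInner`. -/
noncomputable def fockRiesz (T : H →L[ℂ] H) (h v : H) (m : ℕ) : ℂ[X] :=
  ∑ i ∈ Finset.range m, C ((starRingEnd ℂ) (inner ℂ v ((T ^ i) h)) / (i ! : ℂ)) * X ^ i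

theorem coeff_fockRiesz (T : H →L[ℂ] H) (h v : H) (m j : ℕ) :
    (fockRiesz T h v m).coeff j =
      if j < m then (starRingEnd ℂ) (inner ℂ v ((T ^ j) h)) / (j ! : ℂ) else 0 := by
  simp [fockRiesz, finsetSum_coeff]

theorem fockInner_fockRiesz {T : H →L[ℂ] H} {h : H} {m : ℕ} (hm : (T ^ m) h = 0)
    (v : H) (p : ℂ[X]) : fockInner p (fockRiesz T h v m) = inner ℂ v (aeval T p h) := by
  rw [aeval_eq_sum_range, sum_apply, inner_sum, fockInner]
  refine Finset.sum_congr rfl fun j _ => ?_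
  rw [coeff_fockRiesz, smul_apply, inner_smul_right]
  split_ifs with hj
  · have : (j ! : ℂ) ≠ 0 := by exact_mod_cast j.factorial_ne_zero
    simp only [map_div₀, Complex.conj_conj, map_natCast]
    field_simp
  · rw [T.pow_apply_eq_zero_of_le hm (not_lt.mp hj)]
    simp

theorem fockInner_X_pow_eq_zero {p : ℂ[X]} {n : ℕ} (hp : p.natDegree < n) :
    fockInner (X ^ n) p = 0 := by
  simp [fockInner, coeff_X_pow, coeff_eq_zero_of_natDegree_lt hp]

end Fock

-- The paper's `⟨x, y⟩_H`, linear in the first slot, is Mathlib's `inner ℂ y x`.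
theorem stmt10_general {H : Type*} [NormedAddCommGroup H] [InnerProductSpace ℂ H]
    (T : H →L[ℂ] H) (h : H)
    (hcyc : (Submodule.span ℂ
      (Set.range fun m : ℕ => (T ^ m) h)).topologicalClosure = ⊤) :
    (∃ m : ℕ, 1 ≤ m ∧ T ^ m = 0) ↔
    (∃ (N : ℕ) (pk : Fin N → Polynomial ℂ),
      ∀ p q : Polynomial ℂ,
        (inner ℂ ((Polynomial.aeval T q) h) ((Polynomial.aeval T p) h) : ℂ)
          = ∑ k, fockInner p (pk k) * (starRingEnd ℂ) (fockInner q (pk k))) := by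
  constructor
  · rintro ⟨m, -, hm⟩
    have hmh : (T ^ m) h = 0 := by rw [hm, zero_apply]
    have := finiteDimensional_of_cyclic_of_pow_apply_eq_zero hcyc hmh
    let b := stdOrthonormalBasis ℂ H
    refine ⟨_, fun k => fockRiesz T h (b k) m, fun p q => ?_⟩
    simp only [fockInner_fockRiesz hmh, inner_conj_symm, mul_comm (inner ℂ (b _) _)]
    exact (b.sum_inner_mul_inner _ _).symm
  · rintro ⟨N, pk, hpk⟩
    let d := (Finset.univ.sup fun k => (pk k).natDegree) + 1
    have hdeg (k : Fin N) : (pk k).natDegree < d :=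
      Nat.lt_succ_of_le (Finset.le_sup (f := fun k => (pk k).natDegree) (Finset.mem_univ k))
    have hdh : (T ^ d) h = 0 := by
      rw [← inner_self_eq_zero (𝕜 := ℂ), ← aeval_X_pow (R := ℂ), hpk]
      simp [fockInner_X_pow_eq_zero (hdeg _)]
    exact ⟨d, Nat.le_add_left 1 _,
      T.eq_zero_of_commute_of_apply_cyclic_eq_zero hcyc ((Commute.refl T).pow_left d) hdh⟩

/-- let `T` be a bounded operator on a Hilbert space `H` with cyclic vector
`h`.  Then `T` is nilpotent (`T^m = 0` for some `m ≥ 1`) iff there is a finite collection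
of polynomials `p_k` with
`⟨p(T)h, q(T)h⟩ = Σ_k ⟨p, p_k⟩_{H²(ℂ)}·conj(⟨q, p_k⟩_{H²(ℂ)})` for all polynomials `p,q`;
i.e. the associated positive operator `L` on the Fock space is `Σ_k p_k ⊗ p_k`.
(The paper's `⟨x,y⟩_H`, linear in the first slot, is Mathlib's `inner y x`.) -/
theorem stmt10 {H : Type*} [NormedAddCommGroup H] [InnerProductSpace ℂ H] [CompleteSpace H]
    (T : H →L[ℂ] H) (h : H)
    (hcyc : (Submodule.span ℂ
      (Set.range fun m : ℕ => (T ^ m) h)).topologicalClosure = ⊤) :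
    (∃ m : ℕ, 1 ≤ m ∧ T ^ m = 0) ↔
    (∃ (N : ℕ) (pk : Fin N → Polynomial ℂ),
      ∀ p q : Polynomial ℂ,
        (inner ℂ ((Polynomial.aeval T q) h) ((Polynomial.aeval T p) h) : ℂ)
          = ∑ k, fockInner p (pk k) * (starRingEnd ℂ) (fockInner q (pk k))) :=
  stmt10_general T h hcyc
end

section
/- Let the 5×5 matrices T₁, T₂, T₃ be the Varopoulos–Kaijser matrices: T₁ has entries (T₁)_{2,1}=1, (T₁)_{5,2}=1/√3, (T₁)_{5,3}=−1/√3, (T₁)_{5,4}=−1/√3; T₂ has (T₂)_{3,1}=1, (T₂)_{5,2}=−1/√3, (T₂)_{5,3}=1/√3, (T₂)_{5,4}=−1/√3; T₃ has (T₃)_{4,1}=1, (T₃)_{5,2}=−1/√3, (T₃)_{5,3}=−1/√3, (T₃)_{5,4}=1/√3; all other entries zero. Then T₁, T₂, T₃ pairwise commute, and for p(z) = z₁²+z₂²+z₃²−2z₁z₂−2z₁z₃−2z₂z₃, the matrix p(T₁,T₂,T₃) has all entries zero except the (5,1) entry, which equals 3√3; in particular ‖p(T)‖ = 3√3 > 5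 ≥ sup_{z∈𝔻³} |p(z)| fails, i.e., ‖p(T)‖ > ‖p‖_{𝔻³}. -/
open scoped BigOperators

noncomputable def s3 : ℂ := ((Real.sqrt 3 : ℝ) : ℂ)⁻¹

/-- The Varopoulos–Kaijser matrices. -/
noncomputable def VK1 : Matrix (Fin 5) (Fin 5) ℂ :=
  !![0,0,0,0,0; 1,0,0,0,0; 0,0,0,0,0; 0,0,0,0,0; 0,s3,-s3,-s3,0]
noncomputable def VK2 : Matrix (Fin 5) (Fin 5) ℂ :=
  !![0,0,0,0,0; 0,0,0,0,0; 1,0,0,0,0; 0,0,0,0,0; 0,-s3,s3,-s3,0]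
noncomputable def VK3 : Matrix (Fin 5) (Fin 5) ℂ :=
  !![0,0,0,0,0; 0,0,0,0,0; 0,0,0,0,0; 1,0,0,0,0; 0,-s3,-s3,s3,0]

/-- The Hermitian inner product `⟨u,v⟩ = Σ_i u_i·conj(v_i)` on `ℂ⁵`. -/
noncomputable def herm (u v : Fin 5 → ℂ) : ℂ := ∑ i, u i * (starRingEnd ℂ) (v i)

/-! The products `T_i T_j` all equal `±(1/√3) E₅₁`, with sign `+` exactly when `i = j`; hence the
`T_i` commute and `p(T) = (9/√3) E₅₁`.

For the bound on the closed tridisc, the maximum modulus principle in each variable separately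
reduces it to the torus. There write `b c = δ²`, `b = δ w`, `c = δ w̄` and `a = δ x`, so that
`p(a, b, c) = δ² ((x - r)² - 4)` with `|x| = 1` and `r = 2 Re w ∈ [-2, 2]`. With `u = Re x`,
`|(x - r)² - 4|² = 25 - (6 (u - r)² + 10 u² - r² (r - 2u)²)`, and the bracket is nonnegative on
`[-1, 1] × [-2, 2]`. -/

open Matrix ComplexConjugate

lemma sq_mul_sq_sub_le_of_nonneg {u r : ℝ} (hu : u ^ 2 ≤ 1) (hr : r ^ 2 ≤ 4) (hr₀ : 0 ≤ r) :
    r ^ 2 * (r - 2 * u) ^ 2 ≤ 6 * (u - r) ^ 2 + 10 * u ^ 2 := by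
  have h4 : 0 ≤ 4 - r ^ 2 := by linarith
  rcases le_total (r ^ 2) (15 / 4) with hsmall | hlarge
  · -- the difference is `(15/4 - r²)(r - 2u)² + (3r/2 + u)²`
    nlinarith [mul_nonneg (by linarith : (0 : ℝ) ≤ 15 / 4 - r ^ 2) (sq_nonneg (r - 2 * u)),
      sq_nonneg (3 * r / 2 + u)]
  -- otherwise the difference is `(4 - r²)(r - 2u)² + 2r(r + 2u)`
  rcases le_or_gt 0 (r + 2 * u) with hpos | hneg
  · nlinarith [mul_nonneg h4 (sq_nonneg (r - 2 * u)), mul_nonneg hr₀ hpos]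
  · have hr1 : 1 ≤ r := by nlinarith
    have hr2 : r ≤ 2 := by nlinarith
    have hu1 : -1 ≤ u := by nlinarith
    have hfar : 4 * r ^ 2 ≤ (r - 2 * u) ^ 2 := by nlinarith
    nlinarith [mul_le_mul_of_nonneg_left hfar h4,
      mul_nonneg (mul_nonneg (sub_nonneg.2 hr2) hr₀) (by nlinarith : (0 : ℝ) ≤ 2 * r * (2 + r) - 1)]

lemma sq_mul_sq_sub_le {u r : ℝ} (hu : u ^ 2 ≤ 1) (hr : r ^ 2 ≤ 4) :
    r ^ 2 * (r - 2 * u) ^ 2 ≤ 6 * (u - r) ^ 2 + 10 * u ^ 2 := by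
  rcases le_total 0 r with hr₀ | hr₀
  · exact sq_mul_sq_sub_le_of_nonneg hu hr hr₀
  · have := sq_mul_sq_sub_le_of_nonneg (u := -u) (r := -r) (by simpa using hu) (by simpa using hr)
      (by linarith)
    linarith

lemma norm_sq_sub_ofReal_sub_four_le {x : ℂ} (hx : ‖x‖ = 1) {r : ℝ} (hr : |r| ≤ 2) :
    ‖(x - r) ^ 2 - 4‖ ≤ 5 := by
  have hu : x.re ^ 2 + x.im ^ 2 = 1 := by
    rw [← Real.sq_sqrt (by positivity : 0 ≤ x.re ^ 2 + x.im ^ 2), ← Complex.norm_eq_sqrt_sq_add_sq,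
      hx, one_pow]
  have hnormSq : Complex.normSq ((x - r) ^ 2 - 4)
      = 25 - (6 * (x.re - r) ^ 2 + 10 * x.re ^ 2 - r ^ 2 * (r - 2 * x.re) ^ 2) := by
    simp only [sq, Complex.normSq_apply, Complex.sub_re, Complex.mul_re, Complex.ofReal_re,
      Complex.sub_im, Complex.ofReal_im, sub_zero, Complex.re_ofNat, Complex.mul_im,
      Complex.im_ofNat]
    linear_combination (x.im ^ 2 + 9 + 2 * (x.re - r) ^ 2 - x.re ^ 2) * hu
  have hbound := sq_mul_sq_sub_le (u := x.re) (r := r) (by nlinarith [sq_nonneg x.im])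
    (by nlinarith [sq_abs r, abs_nonneg r])
  rw [← sq_le_sq₀ (norm_nonneg _) (by norm_num), Complex.sq_norm, hnormSq]
  linarith

def vkPoly (a b c : ℂ) : ℂ := a ^ 2 + b ^ 2 + c ^ 2 - 2 * a * b - 2 * a * c - 2 * b * c

lemma vkPoly_mul_of_mul_eq_one (δ x : ℂ) {w v : ℂ} (h : w * v = 1) :
    vkPoly (δ * x) (δ * w) (δ * v) = δ ^ 2 * ((x - (w + v)) ^ 2 - 4) := by
  unfold vkPoly
  linear_combination (-4 * δ ^ 2) * h

lemma norm_vkPoly_le_of_norm_eq_one {a b c : ℂ} (ha : ‖a‖ = 1) (hb : ‖b‖ = 1) (hc : ‖c‖ = 1) :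
    ‖vkPoly a b c‖ ≤ 5 := by
  obtain ⟨δ, hδ⟩ := IsAlgClosed.exists_pow_nat_eq (b * c) two_pos
  have hδ1 : ‖δ‖ = 1 := by
    rw [← pow_left_inj₀ (norm_nonneg _) zero_le_one two_ne_zero, ← norm_pow, hδ, norm_mul, hb, hc,
      one_pow, mul_one]
  have hδ0 : δ ≠ 0 := norm_ne_zero_iff.1 (by rw [hδ1]; exact one_ne_zero)
  have hw : ‖b / δ‖ = 1 := by rw [norm_div, hb, hδ1, div_one]
  have hwv : b / δ * (c / δ) = 1 := by
    rw [div_mul_div_comm, ← sq, ← hδ, div_self (pow_ne_zero 2 hδ0)]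
  have hv : c / δ = conj (b / δ) := by
    rw [← Complex.inv_eq_conj hw, eq_inv_of_mul_eq_one_right hwv]
  rw [← mul_div_cancel₀ a hδ0, ← mul_div_cancel₀ b hδ0, ← mul_div_cancel₀ c hδ0,
    vkPoly_mul_of_mul_eq_one δ _ hwv, norm_mul, norm_pow, hδ1, one_pow, one_mul, hv,
    Complex.add_conj]
  refine norm_sq_sub_ofReal_sub_four_le (by rw [norm_div, ha, hδ1, div_one]) ?_
  rw [abs_mul, abs_two]
  linarith [hw ▸ Complex.abs_re_le_norm (b / δ)]

lemma norm_le_of_forall_norm_eq_one_le {F : Type*} [NormedAddCommGroup F] [NormedSpace ℂ F]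
    {f : ℂ → F} (hf : Differentiable ℂ f) {C : ℝ} (h : ∀ z, ‖z‖ = 1 → ‖f z‖ ≤ C) {z : ℂ}
    (hz : ‖z‖ ≤ 1) : ‖f z‖ ≤ C := by
  refine Complex.norm_le_of_forall_mem_frontier_norm_le (Metric.isBounded_ball (x := 0) (r := 1))
    hf.diffContOnCl (fun w hw => h w ?_) ?_
  · rwa [frontier_ball 0 one_ne_zero, mem_sphere_zero_iff_norm] at hw
  · rwa [closure_ball 0 one_ne_zero, mem_closedBall_zero_iff]

lemma norm_vkPoly_le {a b c : ℂ} (ha : ‖a‖ ≤ 1) (hb : ‖b‖ ≤ 1) (hc : ‖c‖ ≤ 1) :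
    ‖vkPoly a b c‖ ≤ 5 := by
  have h₁ {a b c : ℂ} (ha : ‖a‖ = 1) (hb : ‖b‖ = 1) (hc : ‖c‖ ≤ 1) : ‖vkPoly a b c‖ ≤ 5 :=
    norm_le_of_forall_norm_eq_one_le (f := vkPoly a b) (by unfold vkPoly; fun_prop)
      (fun _ hz => norm_vkPoly_le_of_norm_eq_one ha hb hz) hc
  have h₂ {a b c : ℂ} (ha : ‖a‖ = 1) (hb : ‖b‖ ≤ 1) (hc : ‖c‖ ≤ 1) : ‖vkPoly a b c‖ ≤ 5 :=
    norm_le_of_forall_norm_eq_one_le (f := fun z => vkPoly a z c) (by unfold vkPoly; fun_prop)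
      (fun _ hz => h₁ ha hz hc) hb
  exact norm_le_of_forall_norm_eq_one_le (f := fun z => vkPoly z b c) (by unfold vkPoly; fun_prop)
    (fun _ hz => h₂ hz hb hc) ha

noncomputable def vk : Fin 3 → Matrix (Fin 5) (Fin 5) ℂ := ![VK1, VK2, VK3]

lemma vk_mul_vk (i j : Fin 3) :
    vk i * vk j = (if i = j then s3 else -s3) • single 4 0 1 := by
  ext a b
  fin_cases i <;> fin_cases j <;> fin_cases a <;> fin_cases b <;>
    simp [vk, VK1, VK2, VK3, mul_apply, Fin.sum_univ_five]

lemma vk_mul_comm (i j : Fin 3) : vk i * vk j = vk j * vk i := by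
  simp only [vk_mul_vk, eq_comm]

lemma VK_poly_eq_smul_single :
    VK1 ^ 2 + VK2 ^ 2 + VK3 ^ 2 - 2 • (VK1 * VK2) - 2 • (VK1 * VK3) - 2 • (VK2 * VK3)
      = (9 * s3) • single 4 0 1 := by
  change vk 0 ^ 2 + vk 1 ^ 2 + vk 2 ^ 2
    - 2 • (vk 0 * vk 1) - 2 • (vk 0 * vk 2) - 2 • (vk 1 * vk 2) = _
  simp only [sq, vk_mul_vk, Fin.reduceEq, ↓reduceIte]
  module

lemma ofReal_sqrt_three_mul_self : ((√3 : ℝ) : ℂ) * ((√3 : ℝ) : ℂ) = 3 := by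
  norm_cast
  exact Real.mul_self_sqrt (by norm_num)

lemma nine_mul_s3 : 9 * s3 = 3 * ((√3 : ℝ) : ℂ) := by
  have hne : ((√3 : ℝ) : ℂ) ≠ 0 := by norm_cast; positivity
  rw [s3]
  field_simp
  linear_combination -3 * ofReal_sqrt_three_mul_self

/-- the Varopoulos–Kaijser matrices `T₁,T₂,T₃` pairwise commute; for
`p(z) = z₁²+z₂²+z₃²−2z₁z₂−2z₁z₃−2z₂z₃`, the matrix `p(T₁,T₂,T₃)` has all entries `0`
except the `(5,1)` entry, which is `3√3`; each `T_i` is a contraction; `|p| ≤ 5` on the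
closed tridisc; and `‖p(T)‖ ≥ 3√3 > 5` (witnessed by the unit vector `e₁`:
`‖p(T)e₁‖² = 27`), so the three-variable von Neumann inequality fails. -/
theorem stmt13 :
    VK1 * VK2 = VK2 * VK1 ∧ VK1 * VK3 = VK3 * VK1 ∧ VK2 * VK3 = VK3 * VK2 ∧
    (VK1 ^ 2 + VK2 ^ 2 + VK3 ^ 2
        - 2 • (VK1 * VK2) - 2 • (VK1 * VK3) - 2 • (VK2 * VK3))
      = Matrix.of (fun i j : Fin 5 =>
          if i = 4 ∧ j = 0 then 3 * ((Real.sqrt 3 : ℝ) : ℂ) else 0) ∧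
    (∀ z : Fin 3 → ℂ, (∀ i, ‖z i‖ ≤ 1) →
      ‖z 0 ^ 2 + z 1 ^ 2 + z 2 ^ 2
        - 2 * z 0 * z 1 - 2 * z 0 * z 2 - 2 * z 1 * z 2‖ ≤ 5) ∧
    herm
      ((VK1 ^ 2 + VK2 ^ 2 + VK3 ^ 2
          - 2 • (VK1 * VK2) - 2 • (VK1 * VK3) - 2 • (VK2 * VK3)).mulVec
        (fun j => if j = 0 then 1 else 0))
      ((VK1 ^ 2 + VK2 ^ 2 + VK3 ^ 2
          - 2 • (VK1 * VK2) - 2 • (VK1 * VK3) - 2 • (VK2 * VK3)).mulVec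
        (fun j => if j = 0 then 1 else 0)) = 27 ∧
    (5 : ℝ) < 3 * Real.sqrt 3 := by
  rw [VK_poly_eq_smul_single, nine_mul_s3]
  refine ⟨vk_mul_comm 0 1, vk_mul_comm 0 2, vk_mul_comm 1 2, ?_,
    fun z hz => norm_vkPoly_le (hz 0) (hz 1) (hz 2), ?_, ?_⟩
  · ext i j
    simp [single_apply, @eq_comm _ (4 : Fin 5), @eq_comm _ (0 : Fin 5)]
  · simp [herm, Fin.sum_univ_five, mulVec, dotProduct, map_ofNat]
    linear_combination 9 * ofReal_sqrt_three_mul_self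
  · nlinarith [Real.sq_sqrt (by norm_num : (0 : ℝ) ≤ 3), Real.sqrt_nonneg 3]
end

section
/- Let T = N + J be a bounded operator on a Hilbert space H where N is normal, J^k = 0 for some k ≥ 1, and NJ = JN. Then for any h ∈ H, the kernel F_{T,h}(z,w) = ⟨e^{\bar{w}T}h, e^{\bar{z}T}h⟩ satisfies the bound |F_{T,h}(z,w)| ≤ C(1+|z|+|w|)^{2(k-1)} e^{H_K(z+w)} for some constant C > 0, where K is the closed convex hull of the spectrum σ(N) and H_K(z) = sup_{λ∈K} Re(\bar{λ}z) is the supporting function of K. -/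
/-!
Since `N` and `J` commute, `e^{c(N+J)} = e^{cN} e^{cJ}`, so the kernel equals
`⟨h, (e^{z̄J})* e^{zN* + w̄N} e^{w̄J} h⟩`. The nilpotent factors are polynomials of degree
`< k` in `z̄` and `w̄`, and since `N` is normal, `e^{zN* + w̄N}` is the continuous functional
calculus of `μ ↦ e^{z μ̄ + w̄ μ}` at `N`, whose modulus at `μ ∈ σ(N) ⊆ K` is `e^{Re (μ (z + w)‾)} ≤ e^{H_K(z + w)}`.
-/

open ComplexConjugate NormedSpace

namespace NormedSpace

theorem exp_eq_sum_range_of_pow_eq_zero {𝕂 𝔸 : Type*} [Field 𝕂] [CharZero 𝕂] [Ring 𝔸]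
    [Algebra 𝕂 𝔸] [TopologicalSpace 𝔸] [IsTopologicalRing 𝔸] {x : 𝔸} {k : ℕ}
    (hx : x ^ k = 0) :
    exp x = ∑ i ∈ Finset.range k, (i.factorial : 𝕂)⁻¹ • x ^ i := by
  rw [exp_eq_tsum 𝕂]
  refine tsum_eq_sum fun n hn => ?_
  rw [pow_eq_zero_of_le (not_lt.1 (Finset.mem_range.not.1 hn)) hx, smul_zero]

theorem norm_exp_smul_le_of_pow_eq_zero {𝕂 𝔸 : Type*} [RCLike 𝕂] [NormedRing 𝔸]
    [NormedAlgebra 𝕂 𝔸] {x : 𝔸} {k : ℕ} (hx : x ^ k = 0) (c : 𝕂) :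
    ‖exp (c • x)‖ ≤ (∑ i ∈ Finset.range k, ‖x ^ i‖ / i.factorial) * (1 + ‖c‖) ^ (k - 1) := by
  have hcx : (c • x) ^ k = 0 := by rw [smul_pow, hx, smul_zero]
  rw [exp_eq_sum_range_of_pow_eq_zero (𝕂 := 𝕂) hcx, Finset.sum_mul]
  refine (norm_sum_le _ _).trans (Finset.sum_le_sum fun i hi => ?_)
  have hik : i ≤ k - 1 := Nat.le_sub_one_of_lt (Finset.mem_range.1 hi)
  have hci : ‖c‖ ^ i ≤ (1 + ‖c‖) ^ (k - 1) :=
    calc ‖c‖ ^ i ≤ (1 + ‖c‖) ^ i := by gcongr; linarith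
      _ ≤ (1 + ‖c‖) ^ (k - 1) := pow_le_pow_right₀ (by simp) hik
  rw [smul_pow, norm_smul, norm_smul, norm_inv, norm_pow, RCLike.norm_natCast]
  calc (i.factorial : ℝ)⁻¹ * (‖c‖ ^ i * ‖x ^ i‖)
      ≤ (i.factorial : ℝ)⁻¹ * ((1 + ‖c‖) ^ (k - 1) * ‖x ^ i‖) := by gcongr
    _ = ‖x ^ i‖ / i.factorial * (1 + ‖c‖) ^ (k - 1) := by ring

end NormedSpace

theorem norm_exp_smul_star_add_smul_le {A : Type*} [CStarAlgebra A] {a : A} [IsStarNormal a]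
    (z w : ℂ) {c : ℝ} (hc : ∀ μ ∈ spectrum ℂ a, (μ * conj (z + w)).re ≤ c) :
    ‖exp (z • star a + conj w • a)‖ ≤ Real.exp c := by
  have hcfc : cfc (fun μ : ℂ => z * star μ + conj w * μ) a = z • star a + conj w • a := by
    rw [cfc_add (a := a) .., cfc_const_mul _ _ a, cfc_star_id (a := a), cfc_const_mul_id _ a]
  rw [← hcfc, ← CFC.complex_exp_eq_normedSpace_exp, ← cfc_comp' Complex.exp _ a]
  refine norm_cfc_le (Real.exp_nonneg _) fun μ hμ => ?_
  rw [Complex.norm_exp]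
  refine Real.exp_le_exp.2 (le_trans (le_of_eq ?_) (hc μ hμ))
  simp only [map_add, Complex.add_re, Complex.mul_re, Complex.star_def, Complex.conj_re,
    Complex.conj_im, Complex.add_im]
  ring

theorem re_mul_conj_le_sSup_closure_convexHull {S : Set ℂ} (hS : Bornology.IsBounded S)
    {μ : ℂ} (hμ : μ ∈ S) (ζ : ℂ) :
    (μ * conj ζ).re ≤ sSup ((fun l : ℂ => (l * conj ζ).re) '' closure (convexHull ℝ S)) := by
  have hK : IsCompact (closure (convexHull ℝ S)) :=
    (isBounded_convexHull.2 hS).isCompact_closure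
  exact le_csSup (hK.bddAbove_image (by fun_prop))
    ⟨μ, subset_closure (subset_convexHull ℝ S hμ), rfl⟩

theorem star_exp_smul_add_mul_exp_smul_add {A : Type*} [NormedRing A] [NormedAlgebra ℂ A]
    [CompleteSpace A] [StarRing A] [ContinuousStar A] [StarModule ℂ A] {N J : A}
    [hN : IsStarNormal N] (hNJ : Commute N J) (z w : ℂ) :
    star (exp (conj z • (N + J))) * exp (conj w • (N + J)) =
      star (exp (conj z • J)) * exp (z • star N + conj w • N) * exp (conj w • J) := by
  let : NormedAlgebra ℚ A := .restrictScalars ℚ ℂ A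
  have hsplit (c : ℂ) : exp (c • (N + J)) = exp (c • N) * exp (c • J) := by
    rw [smul_add, exp_add_of_commute ((hNJ.smul_left c).smul_right c)]
  have hnormal : exp (z • star N) * exp (conj w • N) = exp (z • star N + conj w • N) :=
    (exp_add_of_commute ((hN.star_comm_self.smul_left z).smul_right _)).symm
  rw [hsplit, hsplit, star_mul, star_exp (conj z • N), star_smul, starRingEnd_apply, star_star,
    ← hnormal]
  noncomm_ring

theorem norm_inner_apply_le_norm_star_mul {𝕜 H : Type*} [RCLike 𝕜] [NormedAddCommGroup H]
    [InnerProductSpace 𝕜 H] [CompleteSpace H] (X Y : H →L[𝕜] H) (h : H) :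
    ‖inner 𝕜 (X h) (Y h)‖ ≤ ‖star X * Y‖ * ‖h‖ ^ 2 := by
  calc ‖inner 𝕜 (X h) (Y h)‖ = ‖inner 𝕜 h ((star X * Y) h)‖ := by
        rw [← ContinuousLinearMap.adjoint_inner_right, ContinuousLinearMap.star_eq_adjoint]; rfl
    _ ≤ ‖h‖ * ‖(star X * Y) h‖ := norm_inner_le_norm _ _
    _ ≤ ‖h‖ * (‖star X * Y‖ * ‖h‖) := by gcongr; exact (star X * Y).le_opNorm h
    _ = ‖star X * Y‖ * ‖h‖ ^ 2 := by ring

theorem one_add_pow_mul_one_add_pow_le {a b : ℝ} (ha : 0 ≤ a) (hb : 0 ≤ b) (n : ℕ) :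
    (1 + a) ^ n * (1 + b) ^ n ≤ (1 + a + b) ^ (2 * n) := by
  rw [two_mul, pow_add]
  exact mul_le_mul (pow_le_pow_left₀ (by linarith) (by linarith) n)
    (pow_le_pow_left₀ (by linarith) (by linarith) n) (by positivity) (by positivity)

theorem stmt17_general {H : Type*} [NormedAddCommGroup H] [InnerProductSpace ℂ H] [CompleteSpace H]
    (N J : H →L[ℂ] H) (k : ℕ)
    (hnormal : ContinuousLinearMap.adjoint N ∘L N = N ∘L ContinuousLinearMap.adjoint N)
    (hnil : J ^ k = 0) (hcomm : N ∘L J = J ∘L N) (h : H) :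
    ∃ C : ℝ, 0 < C ∧ ∀ z w : ℂ,
      ‖(inner ℂ (NormedSpace.exp ((starRingEnd ℂ) z • (N + J)) h)
              (NormedSpace.exp ((starRingEnd ℂ) w • (N + J)) h) : ℂ)‖
        ≤ C * (1 + ‖z‖ + ‖w‖) ^ (2 * (k - 1)) *
          Real.exp (sSup ((fun l : ℂ => (l * (starRingEnd ℂ) (z + w)).re) ''
            (closure (convexHull ℝ (spectrum ℂ N))))) := by
  have : IsStarNormal N := ⟨by rw [ContinuousLinearMap.star_eq_adjoint]; exact hnormal⟩
  set M := ∑ i ∈ Finset.range k, ‖J ^ i‖ / i.factorial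
  refine ⟨M ^ 2 * ‖h‖ ^ 2 + 1, by positivity, fun z w => ?_⟩
  set S := sSup ((fun l : ℂ => (l * conj (z + w)).re) '' closure (convexHull ℝ (spectrum ℂ N)))
  have hA : ‖exp (z • star N + conj w • N)‖ ≤ Real.exp S :=
    norm_exp_smul_star_add_smul_le z w fun μ hμ =>
      re_mul_conj_le_sSup_closure_convexHull (spectrum.isCompact N).isBounded hμ _
  have hJ (c : ℂ) : ‖exp (conj c • J)‖ ≤ M * (1 + ‖c‖) ^ (k - 1) := by
    simpa only [RCLike.norm_conj] using norm_exp_smul_le_of_pow_eq_zero hnil (conj c)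
  calc _ ≤ ‖star (exp (conj z • (N + J))) * exp (conj w • (N + J))‖ * ‖h‖ ^ 2 :=
        norm_inner_apply_le_norm_star_mul _ _ h
    _ = ‖star (exp (conj z • J)) * exp (z • star N + conj w • N) * exp (conj w • J)‖ *
        ‖h‖ ^ 2 := by rw [star_exp_smul_add_mul_exp_smul_add hcomm]
    _ ≤ ‖exp (conj z • J)‖ * ‖exp (z • star N + conj w • N)‖ * ‖exp (conj w • J)‖ * ‖h‖ ^ 2 := by
        grw [norm_mul_le, norm_mul_le, norm_star]
    _ ≤ M * (1 + ‖z‖) ^ (k - 1) * Real.exp S * (M * (1 + ‖w‖) ^ (k - 1)) * ‖h‖ ^ 2 := by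
        grw [hJ, hA, hJ]
    _ = M ^ 2 * ‖h‖ ^ 2 * ((1 + ‖z‖) ^ (k - 1) * (1 + ‖w‖) ^ (k - 1)) * Real.exp S := by ring
    _ ≤ (M ^ 2 * ‖h‖ ^ 2 + 1) * (1 + ‖z‖ + ‖w‖) ^ (2 * (k - 1)) * Real.exp S := by
        grw [one_add_pow_mul_one_add_pow_le (norm_nonneg z) (norm_nonneg w)]
        gcongr
        linarith

/-- let `T = N + J` on a Hilbert space `H` with `N` normal, `J^k = 0`
(`k ≥ 1`), `NJ = JN`.  Then for every `h ∈ H` the kernel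
`F_{T,h}(z,w) = ⟨e^{w̄T}h, e^{z̄T}h⟩` satisfies
`|F_{T,h}(z,w)| ≤ C·(1+|z|+|w|)^{2(k−1)}·e^{H_K(z+w)}` for some `C > 0`, where `K` is the
closed convex hull of `σ(N)` and `H_K(ζ) = sup_{λ∈K} Re(λ·ζ̄)` is its supporting
function. -/
theorem stmt17 {H : Type*} [NormedAddCommGroup H] [InnerProductSpace ℂ H] [CompleteSpace H]
    (N J : H →L[ℂ] H) (k : ℕ) (hk : 1 ≤ k)
    (hnormal : ContinuousLinearMap.adjoint N ∘L N = N ∘L ContinuousLinearMap.adjoint N)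
    (hnil : J ^ k = 0) (hcomm : N ∘L J = J ∘L N) (h : H) :
    ∃ C : ℝ, 0 < C ∧ ∀ z w : ℂ,
      ‖(inner ℂ (NormedSpace.exp ((starRingEnd ℂ) z • (N + J)) h)
              (NormedSpace.exp ((starRingEnd ℂ) w • (N + J)) h) : ℂ)‖
        ≤ C * (1 + ‖z‖ + ‖w‖) ^ (2 * (k - 1)) *
          Real.exp (sSup ((fun l : ℂ => (l * (starRingEnd ℂ) (z + w)).re) ''
            (closure (convexHull ℝ (spectrum ℂ N))))) :=
  stmt17_general N J k hnormal hnil hcomm h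
end

section
/- Let K₁, K₂ be positive semidefinite kernels on a set X with RKHS H(K₁), H(K₂), and let K₁⊙K₂ denote their pointwise product, K₁⊙K₂(x,y) = K₁(x,y)K₂(x,y). Suppose D₁ is a bounded operator on H(K₁) and D₂ a bounded operator on H(K₂), and D is an operator on H(K₁⊙K₂) such that for the restriction-to-diagonal map Λ: H(K₁)⊗H(K₂) → H(K₁⊙K₂), u ↦ (x ↦ û(x,x)), one has D∘Λ = Λ∘(D₁⊗I + I⊗D₂). Then D is bounded with ‖D‖ ≤ ‖D₁‖ + ‖D₂‖. -/
/-! Expanding the vectors `b i` in an orthonormal basis `e` of their span rewrites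
`∑ i, a i ⊗ b i` as `∑ k, x k ⊗ e k`, whose squared norm is `∑ k, ‖x k‖ ^ 2`; since `D₁ ⊗ I`
replaces each `x k` by `D₁ (x k)`, it has norm at most `‖D₁‖` on the algebraic tensor product, and
likewise for `I ⊗ D₂`. Hence `‖D' u‖ ≤ (‖D₁‖ + ‖D₂‖) ‖u‖` on a dense subspace and so everywhere.
Finally, writing `f = Λ u` with `‖u‖ = ‖f‖` gives `‖D f‖ = ‖Λ (D' u)‖ ≤ ‖D' u‖ ≤ (‖D₁‖ + ‖D₂‖) ‖f‖`. -/

open scoped InnerProductSpace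

section

variable {H1 H2 G : Type*}
  [NormedAddCommGroup H1] [InnerProductSpace ℂ H1]
  [NormedAddCommGroup H2] [InnerProductSpace ℂ H2]
  [NormedAddCommGroup G] [InnerProductSpace ℂ G]

theorem exists_orthonormal_sum_apply_eq (τ : H1 →ₗ[ℂ] H2 →ₗ[ℂ] G) {ι : Type*} [Fintype ι]
    (b : ι → H2) :
    ∃ (m : ℕ) (e : Fin m → H2) (c : Fin m → ι → ℂ), Orthonormal ℂ e ∧
      ∀ a : ι → H1, ∑ i, τ (a i) (b i) = ∑ k, τ (∑ i, c k i • a i) (e k) := by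
  let K := Submodule.span ℂ (Set.range b)
  have : FiniteDimensional ℂ K := FiniteDimensional.span_of_finite ℂ (Set.finite_range b)
  let β := stdOrthonormalBasis ℂ K
  refine ⟨_, fun k => (β k : H2), fun k i => ⟪(β k : H2), b i⟫_ℂ,
    β.orthonormal.comp_linearIsometry K.subtypeₗᵢ, fun a => ?_⟩
  have hb : ∀ i, b i = ∑ k, ⟪(β k : H2), b i⟫_ℂ • (β k : H2) := fun i => by
    have := congrArg Subtype.val (β.sum_repr' ⟨b i, Submodule.subset_span ⟨i, rfl⟩⟩)
    simpa only [Submodule.coe_sum, Submodule.coe_smul, Submodule.coe_inner] using this.symm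
  conv_lhs => enter [2, i]; rw [hb i]
  simp only [map_sum, map_smul, LinearMap.sum_apply, LinearMap.smul_apply]
  exact Finset.sum_comm

variable (τ : H1 →ₗ[ℂ] H2 →ₗ[ℂ] G)
  (hτ : ∀ (a c : H1) (b d : H2), ⟪τ a b, τ c d⟫_ℂ = ⟪a, c⟫_ℂ * ⟪b, d⟫_ℂ)
include hτ

theorem norm_sq_sum_apply_orthonormal {ι : Type*} [Fintype ι] {e : ι → H2}
    (he : Orthonormal ℂ e) (x : ι → H1) :
    ‖∑ k, τ (x k) (e k)‖ ^ 2 = ∑ k, ‖x k‖ ^ 2 := by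
  classical
  have h : ⟪∑ k, τ (x k) (e k), ∑ k, τ (x k) (e k)⟫_ℂ = ∑ k, ⟪x k, x k⟫_ℂ := by
    simp only [sum_inner, inner_sum, hτ, orthonormal_iff_ite.mp he, mul_ite, mul_one, mul_zero,
      Finset.sum_ite_eq', Finset.mem_univ, if_true]
  have := congrArg RCLike.re h
  simpa only [map_sum, inner_self_eq_norm_sq] using this

theorem norm_sum_apply_map_le (T : H1 →L[ℂ] H1) {ι : Type*} [Fintype ι] (a : ι → H1)
    (b : ι → H2) :
    ‖∑ i, τ (T (a i)) (b i)‖ ≤ ‖T‖ * ‖∑ i, τ (a i) (b i)‖ := by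
  obtain ⟨m, e, c, he, hsum⟩ := exists_orthonormal_sum_apply_eq τ b
  rw [hsum, hsum]
  simp only [← map_smul, ← map_sum]
  refine (pow_le_pow_iff_left₀ (norm_nonneg _) (by positivity) two_ne_zero).mp ?_
  rw [mul_pow, norm_sq_sum_apply_orthonormal τ hτ he, norm_sq_sum_apply_orthonormal τ hτ he,
    Finset.mul_sum]
  gcongr with k
  rw [← mul_pow]
  gcongr
  exact T.le_opNorm _

theorem norm_apply_sum_le (D1 : H1 →L[ℂ] H1) (D2 : H2 →L[ℂ] H2) (D' : G →ₗ[ℂ] G)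
    (hD' : ∀ a b, D' (τ a b) = τ (D1 a) b + τ a (D2 b)) {ι : Type*} [Fintype ι]
    (a : ι → H1) (b : ι → H2) :
    ‖D' (∑ i, τ (a i) (b i))‖ ≤ (‖D1‖ + ‖D2‖) * ‖∑ i, τ (a i) (b i)‖ := by
  have hτ_flip : ∀ (b d : H2) (a c : H1), ⟪τ.flip b a, τ.flip d c⟫_ℂ = ⟪b, d⟫_ℂ * ⟪a, c⟫_ℂ :=
    fun b d a c => by rw [LinearMap.flip_apply, LinearMap.flip_apply, hτ, mul_comm]
  rw [map_sum, add_mul]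
  simp only [hD', Finset.sum_add_distrib]
  refine (norm_add_le _ _).trans (add_le_add (norm_sum_apply_map_le τ hτ D1 a b) ?_)
  simpa only [LinearMap.flip_apply] using norm_sum_apply_map_le τ.flip hτ_flip D2 b a

end

theorem exists_sum_apply_eq_of_mem_span {R M N P : Type*} [CommSemiring R] [AddCommMonoid M]
    [AddCommMonoid N] [AddCommMonoid P] [Module R M] [Module R N] [Module R P]
    (τ : M →ₗ[R] N →ₗ[R] P) {u : P} (hu : u ∈ Submodule.span R {x | ∃ a b, x = τ a b}) :
    ∃ (n : ℕ) (a : Fin n → M) (b : Fin n → N), u = ∑ i, τ (a i) (b i) := by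
  obtain ⟨n, c, g, rfl⟩ := Submodule.mem_span_set'.mp hu
  choose a b hab using fun i => (g i).2
  exact ⟨n, fun i => c i • a i, b,
    Finset.sum_congr rfl fun i _ => by rw [hab, map_smul, LinearMap.smul_apply]⟩

/-- `G` with `τ` models the Hilbert tensor product `H(K₁) ⊗ H(K₂)`, and `Λ` the restriction to
the diagonal; `hmin` is Aronszajn's description of the norm of `H(K₁ ⊙ K₂)` as a minimum. -/
theorem stmt18_general {H1 H2 G H12 : Type*}
    [NormedAddCommGroup H1] [InnerProductSpace ℂ H1]
    [NormedAddCommGroup H2] [InnerProductSpace ℂ H2]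
    [NormedAddCommGroup G] [InnerProductSpace ℂ G]
    [NormedAddCommGroup H12] [InnerProductSpace ℂ H12]
    (τ : H1 →ₗ[ℂ] H2 →ₗ[ℂ] G)
    (hτinner : ∀ (a c : H1) (b d : H2),
      (inner ℂ (τ a b) (τ c d) : ℂ) = (inner ℂ a c : ℂ) * (inner ℂ b d : ℂ))
    (hτspan : (Submodule.span ℂ {x : G | ∃ a b, x = τ a b}).topologicalClosure = ⊤)
    (Λ : G →L[ℂ] H12) (hΛ : ‖Λ‖ ≤ 1)
    (hmin : ∀ f : H12, ∃ u : G, Λ u = f ∧ ‖u‖ = ‖f‖)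
    (D1 : H1 →L[ℂ] H1) (D2 : H2 →L[ℂ] H2)
    (D' : G →L[ℂ] G)
    (hD' : ∀ (a : H1) (b : H2), D' (τ a b) = τ (D1 a) b + τ a (D2 b))
    (D : H12 →ₗ[ℂ] H12)
    (hcommute : ∀ u : G, D (Λ u) = Λ (D' u)) :
    ∀ f : H12, ‖D f‖ ≤ (‖D1‖ + ‖D2‖) * ‖f‖ := by
  have hD'_le : ∀ u, ‖D' u‖ ≤ (‖D1‖ + ‖D2‖) * ‖u‖ :=
    (Submodule.dense_iff_topologicalClosure_eq_top.mpr hτspan).induction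
      (fun u hu => by
        obtain ⟨n, a, b, rfl⟩ := exists_sum_apply_eq_of_mem_span τ hu
        exact norm_apply_sum_le τ hτinner D1 D2 D'.toLinearMap hD' a b)
      (isClosed_le (by fun_prop) (by fun_prop))
  intro f
  obtain ⟨u, rfl, hu⟩ := hmin f
  calc ‖D (Λ u)‖ = ‖Λ (D' u)‖ := by rw [hcommute]
    _ ≤ 1 * ‖D' u‖ := Λ.le_of_opNorm_le hΛ _
    _ ≤ (‖D1‖ + ‖D2‖) * ‖Λ u‖ := by rw [one_mul, ← hu]; exact hD'_le u

/-- let `K₁, K₂` be PSD kernels on `X`.  Model the Hilbert-space tensor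
product `H(K₁)⊗H(K₂)` abstractly as a Hilbert space `G` with a bilinear map
`τ : H(K₁) → H(K₂) → G` whose image spans densely and with
`⟨τ a b, τ c d⟩ = ⟨a,c⟩·⟨b,d⟩`.  Suppose `Λ : G → H(K₁⊙K₂)` (the restriction-to-diagonal
map) is a contraction such that every `f ∈ H(K₁⊙K₂)` has a preimage `u` with
`‖u‖ = ‖f‖` (Aronszajn: `‖f‖ = min{‖u‖ : Λu = f}`).  Let `D₁, D₂` be bounded operators
on `H(K₁), H(K₂)` and let `D' = D₁⊗I + I⊗D₂` on `G` (i.e.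
`D'(τ a b) = τ (D₁a) b + τ a (D₂b)`).  If a linear map `D` on `H(K₁⊙K₂)` satisfies
`D∘Λ = Λ∘D'`, then `D` is bounded with `‖D f‖ ≤ (‖D₁‖+‖D₂‖)·‖f‖`. -/
theorem stmt18 {H1 H2 G H12 : Type*}
    [NormedAddCommGroup H1] [InnerProductSpace ℂ H1] [CompleteSpace H1]
    [NormedAddCommGroup H2] [InnerProductSpace ℂ H2] [CompleteSpace H2]
    [NormedAddCommGroup G] [InnerProductSpace ℂ G] [CompleteSpace G]
    [NormedAddCommGroup H12] [InnerProductSpace ℂ H12] [CompleteSpace H12]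
    (τ : H1 →ₗ[ℂ] H2 →ₗ[ℂ] G)
    (hτinner : ∀ (a c : H1) (b d : H2),
      (inner ℂ (τ a b) (τ c d) : ℂ) = (inner ℂ a c : ℂ) * (inner ℂ b d : ℂ))
    (hτspan : (Submodule.span ℂ {x : G | ∃ a b, x = τ a b}).topologicalClosure = ⊤)
    (Λ : G →L[ℂ] H12) (hΛ : ‖Λ‖ ≤ 1)
    (hmin : ∀ f : H12, ∃ u : G, Λ u = f ∧ ‖u‖ = ‖f‖)
    (D1 : H1 →L[ℂ] H1) (D2 : H2 →L[ℂ] H2)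
    (D' : G →L[ℂ] G)
    (hD' : ∀ (a : H1) (b : H2), D' (τ a b) = τ (D1 a) b + τ a (D2 b))
    (D : H12 →ₗ[ℂ] H12)
    (hcommute : ∀ u : G, D (Λ u) = Λ (D' u)) :
    ∀ f : H12, ‖D f‖ ≤ (‖D1‖ + ‖D2‖) * ‖f‖ :=
  stmt18_general τ hτinner hτspan Λ hΛ hmin D1 D2 D' hD' D hcommute
end

section
/- Let (T,h) be a cyclic commuting n-tuple on a Hilbert space H, let L = Σ_j f_j ⊗ f_j be the spectral decomposition of the associated positive compact operator on the Fock space H²(ℂⁿ) (with pairwise orthogonal eigenvectors f_j, λ_j = ‖f_j‖²_{H²} > 0), and let F(z,w) = ⟨e^{⟨T,w⟩}h, e^{⟨T,z⟩}h⟩. Then F(z,w) = Σ_j f_j(z)·conj(f_j(w)) for all z,w ∈ ℂⁿ, each f_j lies in the RKHS H(F) with ‖f_j‖_{H(F)} = 1, and {f_j} is an orthonormal basis of H(F); consequently H(F) ⊆ H²(ℂⁿ) as sets of functions. -/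
open scoped BigOperators

/-! The Gram identity `⟪kF z, kF w⟫ = F(z,w) = ⟪κ z, L (κ w)⟫` lets `κ w ↦ kF w` extend to a
bounded operator `A : H²(ℂⁿ) → H(F)` with `⟪A x, A y⟫ = ⟪x, L y⟫`, i.e. `A† A = L`. Hence
`E2 ∘ A = E1 ∘ L`, so `g j = λ_j⁻¹ A (f j)` represents `f j` in `H(F)`, and these vectors are
orthonormal. If `u ⊥ g j` for all `j`, then `A† u ⊥ f j`, so `L (A† u) = 0`, so `A (A† u) = 0` and
`A† u = 0`; as `A` has dense range, `u = 0`. Finally `E2 u = E1 (A† u)` for every `u`, which is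
the inclusion `H(F) ⊆ H²(ℂⁿ)`. -/

open scoped InnerProductSpace InnerProduct
open Finsupp Submodule

section Factorization

variable {𝕜 ι E F : Type*} [RCLike 𝕜]
  [NormedAddCommGroup E] [InnerProductSpace 𝕜 E] [NormedAddCommGroup F] [InnerProductSpace 𝕜 F]
  {u : ι → E} {v : ι → F} {L : E →L[𝕜] E}

theorem inner_linearCombination_eq_inner_apply
    (hgram : ∀ i j, ⟪v i, v j⟫_𝕜 = ⟪u i, L (u j)⟫_𝕜) (c d : ι →₀ 𝕜) :
    ⟪linearCombination 𝕜 v c, linearCombination 𝕜 v d⟫_𝕜 =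
      ⟪linearCombination 𝕜 u c, L (linearCombination 𝕜 u d)⟫_𝕜 := by
  simp only [linearCombination_apply, Finsupp.sum, map_sum, map_smul, sum_inner, inner_sum,
    inner_smul_left, inner_smul_right, hgram]

theorem norm_linearCombination_le_sqrt_opNorm_mul
    (hgram : ∀ i j, ⟪v i, v j⟫_𝕜 = ⟪u i, L (u j)⟫_𝕜) (c : ι →₀ 𝕜) :
    ‖linearCombination 𝕜 v c‖ ≤ √‖L‖ * ‖linearCombination 𝕜 u c‖ := by
  set x := linearCombination 𝕜 u c
  refine (sq_le_sq₀ (norm_nonneg _) (by positivity)).1 ?_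
  calc ‖linearCombination 𝕜 v c‖ ^ 2 = RCLike.re ⟪x, L x⟫_𝕜 := by
        rw [@norm_sq_eq_re_inner 𝕜, inner_linearCombination_eq_inner_apply hgram]
    _ ≤ ‖x‖ * ‖L x‖ := (RCLike.re_le_norm _).trans (norm_inner_le_norm _ _)
    _ ≤ ‖x‖ * (‖L‖ * ‖x‖) := by gcongr; exact L.le_opNorm x
    _ = (√‖L‖ * ‖x‖) ^ 2 := by rw [mul_pow, Real.sq_sqrt (norm_nonneg _)]; ring

theorem exists_map_eq_and_inner_map_map [CompleteSpace F]
    (hgram : ∀ i j, ⟪v i, v j⟫_𝕜 = ⟪u i, L (u j)⟫_𝕜)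
    (hu : (span 𝕜 (Set.range u)).topologicalClosure = ⊤) :
    ∃ A : E →L[𝕜] F, (∀ i, A (u i) = v i) ∧ ∀ x y, ⟪A x, A y⟫_𝕜 = ⟪x, L y⟫_𝕜 := by
  have hdense : DenseRange (linearCombination 𝕜 u) := by
    rw [DenseRange, ← LinearMap.coe_range, range_linearCombination]
    exact dense_iff_topologicalClosure_eq_top.mpr hu
  have hA := LinearMap.extendOfNorm_eq (f := linearCombination 𝕜 v) hdense
    ⟨_, norm_linearCombination_le_sqrt_opNorm_mul hgram⟩
  set A := (linearCombination 𝕜 v).extendOfNorm (linearCombination 𝕜 u)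
  refine ⟨A, fun i => by simpa using hA (single i 1), fun x y => ?_⟩
  refine hdense.induction_on₂ (p := fun x y => ⟪A x, A y⟫_𝕜 = ⟪x, L y⟫_𝕜)
    (isClosed_eq (by fun_prop) (by fun_prop)) (fun c d => ?_) x y
  rw [hA, hA, inner_linearCombination_eq_inner_apply hgram]

end Factorization

section Spectral

variable {𝕜 J E F : Type*} [RCLike 𝕜]
  [NormedAddCommGroup E] [InnerProductSpace 𝕜 E] [NormedAddCommGroup F] [InnerProductSpace 𝕜 F]
  {L : E →L[𝕜] E} {f : J → E}

theorem hasSum_inner_mul_inner (hspec : ∀ x, HasSum (fun j => ⟪f j, x⟫_𝕜 • f j) (L x))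
    (x y : E) : HasSum (fun j => ⟪y, f j⟫_𝕜 * ⟪f j, x⟫_𝕜) ⟪y, L x⟫_𝕜 := by
  simpa only [innerSL_apply_apply, inner_smul_right, mul_comm] using
    (hspec x).mapL (innerSL 𝕜 y)

theorem apply_eq_norm_sq_smul (horth : Pairwise fun j k => ⟪f j, f k⟫_𝕜 = 0)
    (hspec : ∀ x, HasSum (fun j => ⟪f j, x⟫_𝕜 • f j) (L x)) (j : J) :
    L (f j) = (‖f j‖ : 𝕜) ^ 2 • f j := by
  refine (hspec (f j)).unique ?_
  rw [← inner_self_eq_norm_sq_to_K]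
  exact hasSum_single j fun k hk => by rw [horth hk, zero_smul]

theorem apply_eq_zero_of_forall_inner_eq_zero
    (hspec : ∀ x, HasSum (fun j => ⟪f j, x⟫_𝕜 • f j) (L x)) {x : E}
    (hx : ∀ j, ⟪f j, x⟫_𝕜 = 0) : L x = 0 :=
  (hspec x).unique (by simpa only [hx, zero_smul] using hasSum_zero)

variable {A : E →L[𝕜] F}

theorem orthonormal_inv_norm_sq_smul_map (hA : ∀ x y, ⟪A x, A y⟫_𝕜 = ⟪x, L y⟫_𝕜)
    (horth : Pairwise fun j k => ⟪f j, f k⟫_𝕜 = 0) (hnz : ∀ j, f j ≠ 0)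
    (hspec : ∀ x, HasSum (fun j => ⟪f j, x⟫_𝕜 • f j) (L x)) :
    Orthonormal 𝕜 fun j => ((‖f j‖ : 𝕜) ^ 2)⁻¹ • A (f j) := by
  classical
  rw [orthonormal_iff_ite]
  intro j k
  rw [inner_smul_left, inner_smul_right, hA, apply_eq_norm_sq_smul horth hspec, inner_smul_right]
  split_ifs with hjk
  · subst hjk
    have hj : (‖f j‖ : 𝕜) ≠ 0 := by simpa using hnz j
    rw [inner_self_eq_norm_sq_to_K, map_inv₀, map_pow, RCLike.conj_ofReal]
    field_simp
  · simp [horth hjk]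

theorem adjoint_apply_eq_zero_of_forall_inner_map_eq_zero [CompleteSpace E] [CompleteSpace F]
    (hA : ∀ x y, ⟪A x, A y⟫_𝕜 = ⟪x, L y⟫_𝕜)
    (hspec : ∀ x, HasSum (fun j => ⟪f j, x⟫_𝕜 • f j) (L x)) {u : F}
    (hu : ∀ j, ⟪A (f j), u⟫_𝕜 = 0) : (A†) u = 0 := by
  have hLu : L ((A†) u) = 0 := apply_eq_zero_of_forall_inner_eq_zero hspec fun j => by
    rw [ContinuousLinearMap.adjoint_inner_right, hu]
  have hAu : A ((A†) u) = 0 := inner_self_eq_zero.mp (by rw [hA, hLu, inner_zero_right])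
  exact inner_self_eq_zero.mp
    (by rw [ContinuousLinearMap.adjoint_inner_left, hAu, inner_zero_right])

theorem topologicalClosure_span_eq_top_of_map_mem [CompleteSpace E] [CompleteSpace F]
    (hA : ∀ x y, ⟪A x, A y⟫_𝕜 = ⟪x, L y⟫_𝕜)
    (hspec : ∀ x, HasSum (fun j => ⟪f j, x⟫_𝕜 • f j) (L x)) (hdense : DenseRange A)
    {g : J → F} (hg : ∀ j, A (f j) ∈ span 𝕜 (Set.range g)) :
    (span 𝕜 (Set.range g)).topologicalClosure = ⊤ := by
  rw [topologicalClosure_eq_top_iff, eq_bot_iff]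
  intro u hu
  have hAu : (A†) u = 0 := adjoint_apply_eq_zero_of_forall_inner_map_eq_zero hA hspec
    fun j => (mem_orthogonal _ _).1 hu _ (hg j)
  exact (mem_bot 𝕜).2 <| hdense.eq_zero_of_inner_right 𝕜 fun x => by
    rw [← ContinuousLinearMap.adjoint_inner_right, hAu, inner_zero_right]

end Spectral

theorem stmt19_general {H Fk HF : Type*}
    [NormedAddCommGroup H] [InnerProductSpace ℂ H] [CompleteSpace H]
    [NormedAddCommGroup Fk] [InnerProductSpace ℂ Fk] [CompleteSpace Fk]
    [NormedAddCommGroup HF] [InnerProductSpace ℂ HF] [CompleteSpace HF]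
    {n : ℕ} (T : Fin n → H →L[ℂ] H) (h : H)
    -- the Fock space model `Fk`
    (E1 : Fk →ₗ[ℂ] ((Fin n → ℂ) → ℂ))
    (κ : (Fin n → ℂ) → Fk)
    (hrepro1 : ∀ (x : Fk) (w : Fin n → ℂ), E1 x w = inner ℂ (κ w) x)
    (hspan1 : (Submodule.span ℂ (Set.range κ)).topologicalClosure = ⊤)
    -- the operator `L` with `F(z,w) = ⟨L K_w, K_z⟩` and its spectral decomposition
    (L : Fk →L[ℂ] Fk)
    (hLF : ∀ z w : Fin n → ℂ, kerF T h z w = inner ℂ (κ z) (L (κ w)))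
    {J : Type*} (f : J → Fk)
    (horth : ∀ j k, j ≠ k → (inner ℂ (f j) (f k) : ℂ) = 0)
    (hnz : ∀ j, f j ≠ 0)
    (hspec : ∀ x : Fk, HasSum (fun j => (inner ℂ (f j) x : ℂ) • f j) (L x))
    -- the RKHS model of `H(F)`
    (E2 : HF →ₗ[ℂ] ((Fin n → ℂ) → ℂ))
    (kF : (Fin n → ℂ) → HF)
    (hrepro2 : ∀ (u : HF) (w : Fin n → ℂ), E2 u w = inner ℂ (kF w) u)
    (hker2 : ∀ z w : Fin n → ℂ, E2 (kF w) z = kerF T h z w)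
    (hspan2 : (Submodule.span ℂ (Set.range kF)).topologicalClosure = ⊤) :
    (∀ z w : Fin n → ℂ,
      HasSum (fun j => E1 (f j) z * (starRingEnd ℂ) (E1 (f j) w)) (kerF T h z w)) ∧
    (∃ g : J → HF, (∀ j, E2 (g j) = E1 (f j)) ∧ Orthonormal ℂ g ∧
      (Submodule.span ℂ (Set.range g)).topologicalClosure = ⊤) ∧
    (∀ u : HF, ∃ x : Fk, E1 x = E2 u) := by
  have horth' : Pairwise fun j k => ⟪f j, f k⟫_ℂ = 0 := fun j k => horth j k
  obtain ⟨A, hAκ, hA⟩ := exists_map_eq_and_inner_map_map (u := κ) (v := kF) (L := L)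
    (fun z w => by rw [← hrepro2, hker2, hLF]) hspan1
  have hE2A : ∀ x, E2 (A x) = E1 (L x) := fun x => funext fun w => by
    rw [hrepro2, hrepro1, ← hAκ, hA]
  have hdense : DenseRange A := by
    refine (dense_iff_topologicalClosure_eq_top.mpr hspan2).mono ?_
    have : span ℂ (Set.range kF) ≤ LinearMap.range (A : Fk →ₗ[ℂ] HF) :=
      span_le.mpr (Set.range_subset_iff.mpr fun z => ⟨κ z, hAκ z⟩)
    simpa only [LinearMap.coe_range, ContinuousLinearMap.coe_coe] using
      SetLike.coe_subset_coe.mpr this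
  set g : J → HF := fun j => ((‖f j‖ : ℂ) ^ 2)⁻¹ • A (f j)
  have hAf : ∀ j, A (f j) = (‖f j‖ : ℂ) ^ 2 • g j := fun j =>
    (smul_inv_smul₀ (by simpa using hnz j) _).symm
  refine ⟨fun z w => ?_, ⟨g, fun j => ?_, orthonormal_inv_norm_sq_smul_map hA horth' hnz hspec,
    topologicalClosure_span_eq_top_of_map_mem hA hspec hdense fun j => ?_⟩,
    fun u => ⟨(A†) u, funext fun w => ?_⟩⟩
  · simpa only [hrepro1, inner_conj_symm, hLF] using hasSum_inner_mul_inner hspec (κ w) (κ z)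
  · rw [map_smul, hE2A, apply_eq_norm_sq_smul horth' hspec, map_smul]
    exact inv_smul_smul₀ (by simpa using hnz j) _
  · rw [hAf]
    exact smul_mem _ _ (subset_span ⟨j, rfl⟩)
  · rw [hrepro1, hrepro2, ← hAκ, ContinuousLinearMap.adjoint_inner_right]

/-- let `(T,h)` be a cyclic commuting tuple on `H`.  Model the Fock space
`H²(ℂⁿ)` as an RKHS `Fk` (injective linear `E1 : Fk → functions`, kernel vectors `κ w`
with kernel `e^{⟨z,w⟩}`), and let `L` be the positive compact operator on `Fk` with
`F(z,w) = ⟨L K_w, K_z⟩`, with spectral decomposition `L = Σ_j f_j ⊗ f_j` (pairwise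
orthogonal eigenvectors, `λ_j = ‖f_j‖² > 0`).  Let `H(F)` be the RKHS of
`F(z,w) = ⟨e^{⟨T,w⟩}h, e^{⟨T,z⟩}h⟩`, modeled by `E2, kF`.  Then
`F(z,w) = Σ_j f_j(z)·conj(f_j(w))`; the `f_j`, viewed in `H(F)`, form an orthonormal
basis of `H(F)`; and `H(F) ⊆ H²(ℂⁿ)` as sets of functions. -/
theorem stmt19 {H Fk HF : Type*}
    [NormedAddCommGroup H] [InnerProductSpace ℂ H] [CompleteSpace H]
    [NormedAddCommGroup Fk] [InnerProductSpace ℂ Fk] [CompleteSpace Fk]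
    [NormedAddCommGroup HF] [InnerProductSpace ℂ HF] [CompleteSpace HF]
    {n : ℕ} (T : Fin n → H →L[ℂ] H) (hcomm : ∀ i j, T i ∘L T j = T j ∘L T i) (h : H)
    (hcyc : (Submodule.span ℂ
      (Set.range fun α : Fin n → ℕ => opPow T α h)).topologicalClosure = ⊤)
    -- the Fock space model `Fk`
    (E1 : Fk →ₗ[ℂ] ((Fin n → ℂ) → ℂ)) (hE1inj : Function.Injective E1)
    (κ : (Fin n → ℂ) → Fk)
    (hrepro1 : ∀ (x : Fk) (w : Fin n → ℂ), E1 x w = inner ℂ (κ w) x)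
    (hker1 : ∀ z w : Fin n → ℂ,
      E1 (κ w) z = Complex.exp (∑ i, z i * (starRingEnd ℂ) (w i)))
    (hspan1 : (Submodule.span ℂ (Set.range κ)).topologicalClosure = ⊤)
    -- the operator `L` with `F(z,w) = ⟨L K_w, K_z⟩` and its spectral decomposition
    (L : Fk →L[ℂ] Fk)
    (hLF : ∀ z w : Fin n → ℂ, kerF T h z w = inner ℂ (κ z) (L (κ w)))
    {J : Type*} (f : J → Fk)
    (horth : ∀ j k, j ≠ k → (inner ℂ (f j) (f k) : ℂ) = 0)
    (hnz : ∀ j, f j ≠ 0)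
    (hspec : ∀ x : Fk, HasSum (fun j => (inner ℂ (f j) x : ℂ) • f j) (L x))
    -- the RKHS model of `H(F)`
    (E2 : HF →ₗ[ℂ] ((Fin n → ℂ) → ℂ)) (hE2inj : Function.Injective E2)
    (kF : (Fin n → ℂ) → HF)
    (hrepro2 : ∀ (u : HF) (w : Fin n → ℂ), E2 u w = inner ℂ (kF w) u)
    (hker2 : ∀ z w : Fin n → ℂ, E2 (kF w) z = kerF T h z w)
    (hspan2 : (Submodule.span ℂ (Set.range kF)).topologicalClosure = ⊤) :
    (∀ z w : Fin n → ℂ,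
      HasSum (fun j => E1 (f j) z * (starRingEnd ℂ) (E1 (f j) w)) (kerF T h z w)) ∧
    (∃ g : J → HF, (∀ j, E2 (g j) = E1 (f j)) ∧ Orthonormal ℂ g ∧
      (Submodule.span ℂ (Set.range g)).topologicalClosure = ⊤) ∧
    (∀ u : HF, ∃ x : Fk, E1 x = E2 u) :=
  stmt19_general T h E1 κ hrepro1 hspan1 L hLF f horth hnz hspec E2 kF hrepro2 hker2 hspan2
end
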